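/- arXiv:1803.02531 — 5 statements merged into one kernel-verified Lean document; each statement's English description precedes it below -/
import Mathlib

section
/- Let N ≥ 3, Ω an exterior domain in ℝ^N, and V a nonnegative function on Ω with liminf_{|x|→∞} V(x)|x|² > (N-2)²/4. Then there is no positive function u ∈ C²(Ω) satisfying -Δu(x) ≥ V(x)u(x) for all x ∈ Ω and u ≥ 0 on ∂Ω. -/
set_option maxHeartbeats 1000000
open Real Filter Metric Bornology
open Topology

noncomputable def lap {N : ℕ} (u : EuclideanSpace ℝ (Fin N) → ℝ)
    (x : EuclideanSpace ℝ (Fin N)) : ℝ :=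
  ∑ i, iteratedFDeriv ℝ 2 u x ![EuclideanSpace.single i 1, EuclideanSpace.single i 1]

lemma second_deriv_nonneg_at_min {g g' : ℝ → ℝ} {c : ℝ}
    (hg : ∀ᶠ s in 𝓝 (0:ℝ), HasDerivAt g (g' s) s)
    (hg' : HasDerivAt g' c 0)
    (hmin : IsLocalMin g 0) : 0 ≤ c := by
  by_contra hc
  push_neg at hc
  have hg'0 : g' 0 = 0 := hmin.hasDerivAt_eq_zero (hg.self_of_nhds)
  have hslope : Tendsto (fun s => g' s / s) (𝓝[≠] (0:ℝ)) (𝓝 c) := by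
    have := hasDerivAt_iff_tendsto_slope.1 hg'
    have heq : slope g' 0 = fun s => g' s / s := by
      funext s; rw [slope_def_field, hg'0]; ring
    rwa [heq] at this
  have hev : ∀ᶠ s in 𝓝[>] (0:ℝ), g' s < 0 := by
    have h1 : ∀ᶠ s in 𝓝[≠] (0:ℝ), g' s / s < 0 :=
      hslope.eventually_lt_const hc
    have h2 : 𝓝[>] (0:ℝ) ≤ 𝓝[≠] (0:ℝ) :=
      nhdsWithin_mono _ (fun s hs => ne_of_gt hs)
    filter_upwards [h2 h1, self_mem_nhdsWithin] with s hs hs'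
    by_contra hpos
    push_neg at hpos
    exact absurd hs (not_lt.2 (div_nonneg hpos (le_of_lt hs')))
  obtain ⟨u, hu, huIoc⟩ := mem_nhdsGT_iff_exists_Ioc_subset.1 hev
  obtain ⟨δ, hδ, hball⟩ := Metric.eventually_nhds_iff.1 (hg.and hmin)
  set ε : ℝ := min u (δ/2) with hε
  have hεpos : 0 < ε := lt_min hu (by linarith)
  have hεδ : ∀ s ∈ Set.Icc (0:ℝ) ε, dist s (0:ℝ) < δ := by
    intro s hs
    rw [Real.dist_eq, sub_zero, abs_of_nonneg hs.1]
    exact lt_of_le_of_lt (hs.2.trans (min_le_right _ _)) (by linarith)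
  have hcont : ContinuousOn g (Set.Icc 0 ε) := fun s hs =>
    ((hball (hεδ s hs)).1.continuousAt).continuousWithinAt
  have hderiv : ∀ s ∈ interior (Set.Icc (0:ℝ) ε), deriv g s < 0 := by
    intro s hs
    rw [interior_Icc] at hs
    have h1 : HasDerivAt g (g' s) s := (hball (hεδ s ⟨hs.1.le, hs.2.le⟩)).1
    rw [h1.deriv]
    exact huIoc ⟨hs.1, hs.2.le.trans (min_le_left _ _)⟩
  have hanti := strictAntiOn_of_deriv_neg (convex_Icc 0 ε) hcont hderiv
  have := hanti (Set.left_mem_Icc.2 hεpos.le) (Set.right_mem_Icc.2 hεpos.le) hεpos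
  have hge : g 0 ≤ g ε := (hball (hεδ ε (Set.right_mem_Icc.2 hεpos.le))).2
  linarith


section slice


variable {E : Type*} [NormedAddCommGroup E] [NormedSpace ℝ E]

lemma slice_hasDerivAt {h : E → ℝ} {x : E} (hh : ContDiffAt ℝ 2 h x) (v : E) :
    (∀ᶠ s in 𝓝 (0:ℝ), HasDerivAt (fun t : ℝ => h (x + t • v)) (fderiv ℝ h (x + s • v) v) s)
    ∧ HasDerivAt (fun s : ℝ => fderiv ℝ h (x + s • v) v) (fderiv ℝ (fderiv ℝ h) x v v) (0:ℝ) := by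
  have hA : ∀ s : ℝ, HasDerivAt (fun t : ℝ => x + t • v) v s := by
    intro s
    simpa using ((hasDerivAt_id s).smul_const v).const_add x
  have hdiff : ∀ᶠ y in 𝓝 x, DifferentiableAt ℝ h y := by
    obtain ⟨u, hu, hcd⟩ := hh.contDiffOn le_rfl (by simp)
    obtain ⟨t, htu, hto, hxt⟩ := _root_.mem_nhds_iff.1 hu
    filter_upwards [hto.mem_nhds hxt] with y hy
    exact ((hcd.mono htu) y hy).contDiffAt (hto.mem_nhds hy) |>.differentiableAt two_ne_zero
  have htend : Tendsto (fun s : ℝ => x + s • v) (𝓝 (0:ℝ)) (𝓝 x) := by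
    have hc : Continuous fun s : ℝ => x + s • v := by fun_prop
    have := hc.tendsto (0:ℝ)
    simpa using this
  constructor
  · filter_upwards [htend.eventually hdiff] with s hs
    exact hs.hasFDerivAt.comp_hasDerivAt s (hA s)
  · have h2 : ContDiffAt ℝ 1 (fderiv ℝ h) x := hh.fderiv_right (m := 1) (by norm_num)
    have h3 : DifferentiableAt ℝ (fderiv ℝ h) x := h2.differentiableAt one_ne_zero
    have hfd : HasFDerivAt (fderiv ℝ h) (fderiv ℝ (fderiv ℝ h) x) (x + (0:ℝ) • v) := by
      simpa using h3.hasFDerivAt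
    have h4 := hfd.comp_hasDerivAt (0:ℝ) (hA 0)
    have h5 := h4.clm_apply (hasDerivAt_const (0:ℝ) v)
    simpa using h5

end slice



noncomputable def Gf (p b C s : ℝ) : ℝ := s ^ p * Real.sin (b * (Real.log s - C))

noncomputable def Gf1 (p b C s : ℝ) : ℝ :=
  s ^ (p - 1) * (p * Real.sin (b * (Real.log s - C)) + b * Real.cos (b * (Real.log s - C)))

noncomputable def Gf2 (p b C s : ℝ) : ℝ :=
  s ^ (p - 2) * ((p - 1) * (p * Real.sin (b * (Real.log s - C)) + b * Real.cos (b * (Real.log s - C)))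
    + b * (p * Real.cos (b * (Real.log s - C)) - b * Real.sin (b * (Real.log s - C))))

lemma theta_hasDeriv (b C : ℝ) {s : ℝ} (hs : 0 < s) :
    HasDerivAt (fun t => b * (Real.log t - C)) (b * (1 / s)) s := by
  have h := ((Real.hasDerivAt_log (ne_of_gt hs)).sub_const C).const_mul b
  simpa [one_div] using h

lemma Gf_hasDeriv (p b C : ℝ) {s : ℝ} (hs : 0 < s) :
    HasDerivAt (Gf p b C) (Gf1 p b C s) s := by
  have h1 : HasDerivAt (fun t : ℝ => t ^ p) (p * s ^ (p - 1)) s :=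
    Real.hasDerivAt_rpow_const (Or.inl (ne_of_gt hs))
  have h2 : HasDerivAt (fun t => Real.sin (b * (Real.log t - C)))
      (Real.cos (b * (Real.log s - C)) * (b * (1 / s))) s :=
    (Real.hasDerivAt_sin _).comp s (theta_hasDeriv b C hs)
  have h3 := h1.mul h2
  have hsp : s ^ (p - 1) = s ^ p / s := by
    rw [Real.rpow_sub hs, Real.rpow_one]
  have : p * s ^ (p - 1) * Real.sin (b * (Real.log s - C)) +
      s ^ p * (Real.cos (b * (Real.log s - C)) * (b * (1 / s))) = Gf1 p b C s := by
    rw [Gf1, hsp]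
    field_simp
  rw [← this]
  exact h3

lemma Gf1_hasDeriv (p b C : ℝ) {s : ℝ} (hs : 0 < s) :
    HasDerivAt (Gf1 p b C) (Gf2 p b C s) s := by
  have h1 : HasDerivAt (fun t : ℝ => t ^ (p - 1)) ((p - 1) * s ^ (p - 1 - 1)) s :=
    Real.hasDerivAt_rpow_const (Or.inl (ne_of_gt hs))
  have hθ := theta_hasDeriv b C hs
  have hsin : HasDerivAt (fun t => Real.sin (b * (Real.log t - C)))
      (Real.cos (b * (Real.log s - C)) * (b * (1 / s))) s :=
    (Real.hasDerivAt_sin _).comp s hθ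
  have hcos : HasDerivAt (fun t => Real.cos (b * (Real.log t - C)))
      (-Real.sin (b * (Real.log s - C)) * (b * (1 / s))) s :=
    (Real.hasDerivAt_cos _).comp s hθ
  have h2 := (hsin.const_mul p).add (hcos.const_mul b)
  have h3 := h1.mul h2
  have hsp : s ^ (p - 1 - 1) = s ^ (p - 2) * s / s := by
    rw [show p - 1 - 1 = p - 2 by ring]
    field_simp
  have hsp2 : s ^ (p - 1) = s ^ (p - 2) * s := by
    rw [show p - 1 = p - 2 + 1 by ring, Real.rpow_add hs, Real.rpow_one]
  have heq : (p - 1) * s ^ (p - 1 - 1) *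
        (p * Real.sin (b * (Real.log s - C)) + b * Real.cos (b * (Real.log s - C))) +
      s ^ (p - 1) *
        (p * (Real.cos (b * (Real.log s - C)) * (b * (1 / s))) +
          b * (-Real.sin (b * (Real.log s - C)) * (b * (1 / s)))) = Gf2 p b C s := by
    rw [Gf2, hsp, hsp2]
    field_simp
    ring
  rw [← heq]
  exact h3

lemma Gf_contDiffAt (p b C : ℝ) {s : ℝ} (hs : 0 < s) :
    ContDiffAt ℝ 2 (Gf p b C) s := by
  have h1 : ContDiffAt ℝ 2 (fun t : ℝ => t ^ p) s :=
    Real.contDiffAt_rpow_const_of_ne (ne_of_gt hs)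
  have h2 : ContDiffAt ℝ 2 (fun t : ℝ => b * (Real.log t - C)) s :=
    contDiffAt_const.mul ((Real.contDiffAt_log.2 (ne_of_gt hs)).sub contDiffAt_const)
  exact h1.mul (Real.contDiff_sin.comp_contDiffAt s h2)

lemma Gf_identity (N : ℕ) (b C : ℝ) {s : ℝ} (hs : 0 < s) :
    4 * s * Gf2 (-((N:ℝ) - 2)/4) b C s + 2 * N * Gf1 (-((N:ℝ) - 2)/4) b C s =
      -(4 * (-((N:ℝ) - 2)/4) ^ 2 + 4 * b ^ 2) * Gf (-((N:ℝ) - 2)/4) b C s / s := by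
  set p : ℝ := -((N:ℝ) - 2)/4 with hp
  have hsp1 : s ^ (p - 1) = s ^ (p - 2) * s := by
    rw [show p - 1 = p - 2 + 1 by ring, Real.rpow_add hs, Real.rpow_one]
  have hsp0 : s ^ p = s ^ (p - 2) * s * s := by
    have h1 : s ^ (p - 2) * s * s = s ^ (p - 2 + 1 + 1) := by
      rw [Real.rpow_add hs, Real.rpow_add hs, Real.rpow_one]
    rw [show p - 2 + 1 + 1 = p by ring] at h1
    exact h1.symm
  rw [Gf, Gf1, Gf2, hsp1, hsp0]
  have hN : (N:ℝ) = -4*p + 2 := by rw [hp]; ring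
  rw [hN]
  field_simp
  ring

lemma slice_G {p b C r2 xi : ℝ} (hr2 : 0 < r2) :
    (∀ᶠ s in 𝓝 (0:ℝ), HasDerivAt (fun t : ℝ => Gf p b C (r2 + 2*t*xi + t^2))
        (Gf1 p b C (r2 + 2*s*xi + s^2) * (2*xi + 2*s)) s)
    ∧ HasDerivAt (fun s : ℝ => Gf1 p b C (r2 + 2*s*xi + s^2) * (2*xi + 2*s))
        (Gf2 p b C r2 * (2*xi)^2 + Gf1 p b C r2 * 2) 0 := by
  have hq : ∀ s : ℝ, HasDerivAt (fun t : ℝ => r2 + 2*t*xi + t^2) (2*xi + 2*s) s := by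
    intro s
    have h1 : HasDerivAt (fun t : ℝ => 2*t*xi) (2*xi) s := by
      simpa using ((hasDerivAt_id s).const_mul 2).mul_const xi
    have h2 : HasDerivAt (fun t : ℝ => t^2) (2*s) s := by simpa using hasDerivAt_pow 2 s
    exact (h1.const_add r2).add h2
  have hc : Continuous fun s : ℝ => r2 + 2*s*xi + s^2 := by fun_prop
  have ht : Tendsto (fun s : ℝ => r2 + 2*s*xi + s^2) (𝓝 (0:ℝ)) (𝓝 r2) := by
    simpa using hc.tendsto (0:ℝ)
  have hpos : ∀ᶠ s in 𝓝 (0:ℝ), 0 < r2 + 2*s*xi + s^2 := ht.eventually (eventually_gt_nhds hr2)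
  constructor
  · filter_upwards [hpos] with s hs
    exact (Gf_hasDeriv p b C hs).comp s (hq s)
  · have h0 : r2 + 2*(0:ℝ)*xi + 0^2 = r2 := by ring
    have hA0 : 0 < r2 + 2*(0:ℝ)*xi + 0^2 := by rw [h0]; exact hr2
    have hA := (Gf1_hasDeriv p b C hA0).comp (0:ℝ) (hq 0)
    rw [h0] at hA
    have hB : HasDerivAt (fun s : ℝ => 2*xi + 2*s) 2 0 := by
      simpa using ((hasDerivAt_id (0:ℝ)).const_mul 2).const_add (2*xi)
    have h3 := hA.mul hB
    have h4 : HasDerivAt (fun s : ℝ => Gf1 p b C (r2 + 2*s*xi + s^2) * (2*xi + 2*s))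
        (Gf2 p b C r2 * (2*xi + 2*0) * (2*xi + 2*0) + Gf1 p b C (r2 + 2*0*xi + 0^2) * 2) 0 := h3
    rw [h0] at h4
    convert h4 using 1
    ring


theorem stmt5 (N : ℕ) (hN : 3 ≤ N)
    (O : Set (EuclideanSpace ℝ (Fin N))) (hOc : IsClosed O) (hOb : IsBounded O)
    (Ω : Set (EuclideanSpace ℝ (Fin N))) (hΩ : Ω = Oᶜ)
    (V : EuclideanSpace ℝ (Fin N) → ℝ) (hV : ∀ x ∈ Ω, 0 ≤ V x)
    (hVinf : ((N:ℝ) - 2) ^ 2 / 4 <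
      liminf (fun x => V x * ‖x‖ ^ 2) (cobounded (EuclideanSpace ℝ (Fin N)))) :
    ¬ ∃ u : EuclideanSpace ℝ (Fin N) → ℝ,
        ContDiffOn ℝ 2 u Ω ∧ (∀ x ∈ Ω, 0 < u x) ∧
        (∀ x ∈ Ω, V x * u x ≤ -lap u x) ∧
        (∀ x ∈ frontier Ω, 0 ≤ u x) := by
  rintro ⟨u, hu1, hu2, hu3, -⟩
  let E := EuclideanSpace ℝ (Fin N)
  have hΩo : IsOpen Ω := by rw [hΩ]; exact hOc.isOpen_compl
  set c : ℝ := ((N:ℝ) - 2) ^ 2 / 4 with hc_def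
  set L : ℝ := liminf (fun x => V x * ‖x‖ ^ 2) (cobounded E) with hL_def
  have hcL : c < L := hVinf
  set μ : ℝ := (c + L) / 2 with hμ_def
  have hcμ : c < μ := by rw [hμ_def]; linarith
  have hμL : μ < L := by rw [hμ_def]; linarith
  have hOcompl : Oᶜ ∈ cobounded E := isBounded_def.1 hOb
  have hΩev : ∀ᶠ x in cobounded E, x ∈ Ω := by
    rw [hΩ]; exact eventually_iff.2 hOcompl
  have hbdd : IsBoundedUnder (· ≥ ·) (cobounded E) (fun x => V x * ‖x‖ ^ 2) := by
    refine ⟨0, ?_⟩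
    rw [eventually_map]
    filter_upwards [hΩev] with x hx
    exact mul_nonneg (hV x hx) (pow_nonneg (norm_nonneg x) 2)
  have hev : ∀ᶠ x in cobounded E, μ < V x * ‖x‖ ^ 2 := eventually_lt_of_lt_liminf hμL hbdd
  have hev2 : ∀ᶠ x in cobounded E, μ ≤ V x * ‖x‖ ^ 2 ∧ x ∈ Ω := by
    filter_upwards [hev, hΩev] with x h1 h2
    exact ⟨h1.le, h2⟩
  have hBnd : IsBounded {x : E | μ ≤ V x * ‖x‖ ^ 2 ∧ x ∈ Ω}ᶜ := by
    rw [isBounded_def, compl_compl]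
    exact eventually_iff.1 hev2
  obtain ⟨R, hR⟩ := isBounded_iff_forall_norm_le.1 hBnd
  set R₁ : ℝ := max R 0 + 1 with hR₁_def
  have hR₁1 : 1 ≤ R₁ := by rw [hR₁_def]; have := le_max_right R 0; linarith
  have hR₁pos : 0 < R₁ := by linarith
  have hP : ∀ x : E, R₁ ≤ ‖x‖ → μ ≤ V x * ‖x‖ ^ 2 ∧ x ∈ Ω := by
    intro x hx
    by_contra h
    have hmem : x ∈ {x : E | μ ≤ V x * ‖x‖ ^ 2 ∧ x ∈ Ω}ᶜ := h
    have := hR x hmem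
    have : ‖x‖ ≤ max R 0 := this.trans (le_max_left R 0)
    linarith
  -- constants
  set β : ℝ := Real.sqrt ((μ - c) / 2) with hβ_def
  have hβpos : 0 < β := Real.sqrt_pos.2 (by linarith)
  have hβsq : β ^ 2 = (μ - c) / 2 := Real.sq_sqrt (by linarith)
  set b : ℝ := β / 2 with hb_def
  set p : ℝ := -((N:ℝ) - 2) / 4 with hp_def
  set lam : ℝ := 4 * p ^ 2 + 4 * b ^ 2 with hlam_def
  have hlamval : lam = c + (μ - c) / 2 := by
    rw [hlam_def, hp_def, hb_def, hc_def]
    have : 4 * (β/2) ^ 2 = β ^ 2 := by ring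
    rw [this, hβsq]
    ring
  have hlamμ : lam < μ := by rw [hlamval]; linarith
  have hlampos : 0 < lam := by rw [hlamval]; rw [hc_def] at hcμ ⊢; nlinarith [sq_nonneg ((N:ℝ)-2)]
  set C : ℝ := 2 * Real.log R₁ with hC_def
  set R₂ : ℝ := R₁ * Real.exp (π / β) with hR₂_def
  set w : E → ℝ := fun x => Gf p b C (‖x‖ ^ 2) with hw_def
  -- radial formula
  have hGr : ∀ r : ℝ, 0 < r → Gf p b C (r ^ 2) =
      (r ^ 2) ^ p * Real.sin (β * (Real.log r - Real.log R₁)) := by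
    intro r hr
    rw [Gf]
    congr 2
    rw [Real.log_pow, hC_def, hb_def]
    push_cast
    ring
  -- annulus
  set A : Set E := Metric.closedBall (0:E) R₂ ∩ {x : E | R₁ ≤ ‖x‖} with hA_def
  have hAnorm : ∀ x : E, x ∈ A ↔ ‖x‖ ≤ R₂ ∧ R₁ ≤ ‖x‖ := by
    intro x
    rw [hA_def, Set.mem_inter_iff, mem_closedBall_zero_iff]
    rfl
  have hAcomp : IsCompact A :=
    (isCompact_closedBall (0:E) R₂).inter_right (isClosed_le continuous_const continuous_norm)
  have hAΩ : ∀ x ∈ A, x ∈ Ω := fun x hx => (hP x ((hAnorm x).1 hx).2).2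
  have hAV : ∀ x ∈ A, μ ≤ V x * ‖x‖ ^ 2 := fun x hx => (hP x ((hAnorm x).1 hx).2).1
  -- midpoint
  have hNpos : 0 < N := by omega
  haveI : NeZero N := ⟨by omega⟩
  set i0 : Fin N := ⟨0, hNpos⟩ with hi0
  set Rm : ℝ := R₁ * Real.exp (π / (2 * β)) with hRm_def
  set xmid : E := Rm • (EuclideanSpace.single i0 (1:ℝ)) with hxmid_def
  have hRmpos : 0 < Rm := mul_pos hR₁pos (Real.exp_pos _)
  have hxmidnorm : ‖xmid‖ = Rm := by
    rw [hxmid_def, norm_smul, EuclideanSpace.norm_single]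
    simp [abs_of_pos hRmpos]
  have hRmlb : R₁ ≤ Rm := by
    rw [hRm_def]
    exact le_mul_of_one_le_right hR₁pos.le
      (Real.one_le_exp (le_of_lt (div_pos Real.pi_pos (by linarith) : (0:ℝ) < π / (2*β))))
  have hRmub : Rm ≤ R₂ := by
    rw [hRm_def, hR₂_def]
    have h1 : π / (2 * β) ≤ π / β := by
      apply div_le_div_of_nonneg_left Real.pi_pos.le hβpos
      linarith
    exact mul_le_mul_of_nonneg_left (Real.exp_le_exp.2 h1) hR₁pos.le
  have hxmidA : xmid ∈ A := (hAnorm xmid).2 ⟨by rw [hxmidnorm]; exact hRmub, by rw [hxmidnorm]; exact hRmlb⟩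
  -- w is C² away from 0 and positive at xmid
  have hwCAt : ∀ x : E, 0 < ‖x‖ → ContDiffAt ℝ 2 w x := by
    intro x hx
    have h1 : ContDiffAt ℝ 2 (Gf p b C) (‖x‖ ^ 2) := Gf_contDiffAt p b C (by positivity)
    have h2 : ContDiffAt ℝ 2 (fun y : E => ‖y‖ ^ 2) x := (contDiff_norm_sq (𝕜 := ℝ)).contDiffAt
    exact h1.comp x h2
  have hwpos_mid : 0 < w xmid := by
    rw [hw_def]
    simp only []
    rw [hxmidnorm, hGr Rm hRmpos]
    have hlog : Real.log Rm = Real.log R₁ + π / (2 * β) := by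
      rw [hRm_def, Real.log_mul (ne_of_gt hR₁pos) (Real.exp_ne_zero _), Real.log_exp]
    have harg : β * (Real.log Rm - Real.log R₁) = π / 2 := by
      rw [hlog]
      field_simp
      ring
    rw [harg, Real.sin_pi_div_two]
    have := Real.rpow_pos_of_pos (show (0:ℝ) < Rm ^ 2 by positivity) p
    linarith
  -- maximize w/u over A
  have hucont : ContinuousOn u A := (hu1.continuousOn).mono (fun x hx => hAΩ x hx)
  have hApos : ∀ x ∈ A, 0 < ‖x‖ := fun x hx => lt_of_lt_of_le hR₁pos ((hAnorm x).1 hx).2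
  have hwcont : ContinuousOn w A := fun x hx => ((hwCAt x (hApos x hx)).continuousAt).continuousWithinAt
  have hupos : ∀ x ∈ A, 0 < u x := fun x hx => hu2 x (hAΩ x hx)
  have hφcont : ContinuousOn (fun x => w x / u x) A :=
    hwcont.div hucont (fun x hx => ne_of_gt (hupos x hx))
  obtain ⟨x₀, hx₀A, hx₀max⟩ := hAcomp.exists_isMaxOn ⟨xmid, hxmidA⟩ hφcont
  have hux₀ : 0 < u x₀ := hupos x₀ hx₀A
  have hφpos : 0 < w x₀ / u x₀ := by
    have h1 : 0 < w xmid / u xmid := div_pos hwpos_mid (hupos xmid hxmidA)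
    exact lt_of_lt_of_le h1 (hx₀max hxmidA)
  have hwx₀ : 0 < w x₀ := by
    by_contra h
    push_neg at h
    exact absurd hφpos (not_lt.2 (div_nonpos_of_nonpos_of_nonneg h hux₀.le))
  -- x₀ is strictly inside the annulus
  have hr₀lb : R₁ ≤ ‖x₀‖ := ((hAnorm x₀).1 hx₀A).2
  have hr₀ub : ‖x₀‖ ≤ R₂ := ((hAnorm x₀).1 hx₀A).1
  have hr₀pos : 0 < ‖x₀‖ := lt_of_lt_of_le hR₁pos hr₀lb
  have hr2pos : 0 < ‖x₀‖ ^ 2 := by positivity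
  have hsinpos : 0 < Real.sin (β * (Real.log ‖x₀‖ - Real.log R₁)) := by
    have h := hwx₀
    rw [hw_def] at h
    simp only [] at h
    rw [hGr ‖x₀‖ hr₀pos] at h
    have hrp : 0 < (‖x₀‖ ^ 2) ^ p := Real.rpow_pos_of_pos hr2pos p
    by_contra hs
    push_neg at hs
    have := mul_nonpos_of_nonneg_of_nonpos hrp.le hs
    linarith
  have hlogR₂ : Real.log R₂ = Real.log R₁ + π / β := by
    rw [hR₂_def, Real.log_mul (ne_of_gt hR₁pos) (Real.exp_ne_zero _), Real.log_exp]
  have hθub : β * (Real.log ‖x₀‖ - Real.log R₁) ≤ π := by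
    have h1 : Real.log ‖x₀‖ ≤ Real.log R₂ := Real.log_le_log hr₀pos hr₀ub
    rw [hlogR₂] at h1
    have h2 : Real.log ‖x₀‖ - Real.log R₁ ≤ π / β := by linarith
    calc β * (Real.log ‖x₀‖ - Real.log R₁) ≤ β * (π / β) :=
          mul_le_mul_of_nonneg_left h2 hβpos.le
      _ = π := by field_simp
  have hθlb : 0 ≤ β * (Real.log ‖x₀‖ - Real.log R₁) := by
    have h1 : Real.log R₁ ≤ Real.log ‖x₀‖ := Real.log_le_log hR₁pos hr₀lb
    exact mul_nonneg hβpos.le (by linarith)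
  have hθpos : 0 < β * (Real.log ‖x₀‖ - Real.log R₁) := by
    rcases lt_or_eq_of_le hθlb with h | h
    · exact h
    · rw [← h, Real.sin_zero] at hsinpos; linarith
  have hθlt : β * (Real.log ‖x₀‖ - Real.log R₁) < π := by
    rcases lt_or_eq_of_le hθub with h | h
    · exact h
    · rw [h, Real.sin_pi] at hsinpos; linarith
  have hr₀gt : R₁ < ‖x₀‖ := by
    have h1 : Real.log R₁ < Real.log ‖x₀‖ := by
      by_contra hcon
      push_neg at hcon
      have := mul_nonpos_of_nonneg_of_nonpos hβpos.le (by linarith : Real.log ‖x₀‖ - Real.log R₁ ≤ 0)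
      linarith
    by_contra hcon
    push_neg at hcon
    exact absurd (Real.log_le_log hr₀pos hcon) (not_le.2 h1)
  have hr₀lt : ‖x₀‖ < R₂ := by
    have h1 : Real.log ‖x₀‖ < Real.log R₁ + π / β := by
      have h2 : Real.log ‖x₀‖ - Real.log R₁ < π / β := by
        by_contra hcon
        push_neg at hcon
        have : π ≤ β * (Real.log ‖x₀‖ - Real.log R₁) := by
          calc π = β * (π / β) := by field_simp
            _ ≤ β * (Real.log ‖x₀‖ - Real.log R₁) := mul_le_mul_of_nonneg_left hcon hβpos.le
        linarith
      linarith
    rw [← hlogR₂] at h1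
    by_contra hcon
    push_neg at hcon
    have hR₂pos : 0 < R₂ := mul_pos hR₁pos (Real.exp_pos _)
    exact absurd (Real.log_le_log hR₂pos hcon) (not_le.2 h1)
  -- the touching function u - t0 * w has a local min at x₀
  set t0 : ℝ := u x₀ / w x₀ with ht0_def
  have ht0pos : 0 < t0 := div_pos hux₀ hwx₀
  have ht0w : t0 * w x₀ = u x₀ := div_mul_cancel₀ (u x₀) (ne_of_gt hwx₀)
  have hminh : IsLocalMin (fun x => u x - t0 * w x) x₀ := by
    have hopen : IsOpen {x : EuclideanSpace ℝ (Fin N) | R₁ < ‖x‖ ∧ ‖x‖ < R₂} :=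
      (isOpen_lt continuous_const continuous_norm).and (isOpen_lt continuous_norm continuous_const)
    have hx₀o : x₀ ∈ {x : EuclideanSpace ℝ (Fin N) | R₁ < ‖x‖ ∧ ‖x‖ < R₂} := ⟨hr₀gt, hr₀lt⟩
    have hev3 : ∀ᶠ y in 𝓝 x₀, u x₀ - t0 * w x₀ ≤ u y - t0 * w y := by
      filter_upwards [hopen.mem_nhds hx₀o] with y hy
      have hyA : y ∈ A := (hAnorm y).2 ⟨hy.2.le, hy.1.le⟩
      have huy := hupos y hyA
      have cross : w y * u x₀ ≤ w x₀ * u y := by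
        have hmax : w y / u y ≤ w x₀ / u x₀ := hx₀max hyA
        rwa [div_le_div_iff₀ huy hux₀] at hmax
      have hwy : t0 * w y ≤ u y := by
        rw [ht0_def, div_mul_eq_mul_div, div_le_iff₀ hwx₀]
        linarith [mul_comm (u x₀) (w y), mul_comm (u y) (w x₀), cross]
      linarith [ht0w]
    exact hev3
  have huCA : ContDiffAt ℝ 2 u x₀ := hu1.contDiffAt (hΩo.mem_nhds (hAΩ x₀ hx₀A))
  have hwCA : ContDiffAt ℝ 2 w x₀ := hwCAt x₀ hr₀pos
  -- second derivative test along each coordinate direction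
  have key : ∀ i : Fin N,
      0 ≤ fderiv ℝ (fderiv ℝ u) x₀ (EuclideanSpace.single i 1) (EuclideanSpace.single i 1)
        - t0 * (Gf2 p b C (‖x₀‖ ^ 2) * (2 * x₀ i) ^ 2 + Gf1 p b C (‖x₀‖ ^ 2) * 2) := by
    intro i
    set v : EuclideanSpace ℝ (Fin N) := EuclideanSpace.single i (1:ℝ) with hv_def
    obtain ⟨hus, hud2⟩ := slice_hasDerivAt huCA v
    obtain ⟨hws, hwd2⟩ := slice_hasDerivAt hwCA v
    have hqeq : ∀ t : ℝ, ‖x₀ + t • v‖ ^ 2 = ‖x₀‖ ^ 2 + 2 * t * (x₀ i) + t ^ 2 := by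
      intro t
      rw [norm_add_sq_real, real_inner_smul_right, hv_def, EuclideanSpace.inner_single_right,
        norm_smul, EuclideanSpace.norm_single]
      simp [Real.norm_eq_abs, sq_abs, mul_pow]
      ring
    have hfun : (fun t : ℝ => w (x₀ + t • v)) =
        fun t : ℝ => Gf p b C (‖x₀‖ ^ 2 + 2 * t * (x₀ i) + t ^ 2) := by
      funext t
      rw [hw_def]
      simp only []
      rw [hqeq t]
    obtain ⟨hGs, hGd2⟩ := slice_G (p := p) (b := b) (C := C) (xi := x₀ i) hr2pos
    have heqd : (fun s : ℝ => fderiv ℝ w (x₀ + s • v) v) =ᶠ[𝓝 (0:ℝ)]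
        fun s : ℝ => Gf1 p b C (‖x₀‖ ^ 2 + 2 * s * (x₀ i) + s ^ 2) * (2 * (x₀ i) + 2 * s) := by
      filter_upwards [hws, hGs] with s h1 h2
      rw [← hfun] at h2
      exact h1.unique h2
    have hwd2' : HasDerivAt
        (fun s : ℝ => Gf1 p b C (‖x₀‖ ^ 2 + 2 * s * (x₀ i) + s ^ 2) * (2 * (x₀ i) + 2 * s))
        (fderiv ℝ (fderiv ℝ w) x₀ v v) 0 :=
      hwd2.congr_of_eventuallyEq heqd.symm
    have hcw : fderiv ℝ (fderiv ℝ w) x₀ v v =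
        Gf2 p b C (‖x₀‖ ^ 2) * (2 * (x₀ i)) ^ 2 + Gf1 p b C (‖x₀‖ ^ 2) * 2 :=
      hwd2'.unique hGd2
    have htendv : Tendsto (fun s : ℝ => x₀ + s • v) (𝓝 (0:ℝ)) (𝓝 x₀) := by
      have hcv : Continuous fun s : ℝ => x₀ + s • v := by fun_prop
      simpa using hcv.tendsto (0:ℝ)
    have hming : IsLocalMin (fun s : ℝ => u (x₀ + s • v) - t0 * w (x₀ + s • v)) 0 := by
      have hev4 := htendv.eventually hminh
      have h00 : x₀ + (0:ℝ) • v = x₀ := by simp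
      refine hev4.mono fun s hs => ?_
      simpa [h00] using hs
    have hgd : ∀ᶠ s in 𝓝 (0:ℝ), HasDerivAt
        (fun t : ℝ => u (x₀ + t • v) - t0 * w (x₀ + t • v))
        (fderiv ℝ u (x₀ + s • v) v - t0 * fderiv ℝ w (x₀ + s • v) v) s := by
      filter_upwards [hus, hws] with s h1 h2
      exact h1.sub (h2.const_mul t0)
    have hgd2 : HasDerivAt
        (fun s : ℝ => fderiv ℝ u (x₀ + s • v) v - t0 * fderiv ℝ w (x₀ + s • v) v)
        (fderiv ℝ (fderiv ℝ u) x₀ v v - t0 * fderiv ℝ (fderiv ℝ w) x₀ v v) 0 :=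
      hud2.sub (hwd2.const_mul t0)
    have hres := second_deriv_nonneg_at_min hgd hgd2 hming
    rw [hcw] at hres
    exact hres
  -- sum the second derivative inequalities
  have hsumsq : ∑ i, (x₀ i) ^ 2 = ‖x₀‖ ^ 2 := by
    rw [EuclideanSpace.norm_eq x₀, Real.sq_sqrt (Finset.sum_nonneg fun i _ => sq_nonneg _)]
    refine Finset.sum_congr rfl fun i _ => ?_
    rw [Real.norm_eq_abs, sq_abs]
  have hlapu : lap u x₀ = ∑ i, fderiv ℝ (fderiv ℝ u) x₀
      (EuclideanSpace.single i 1) (EuclideanSpace.single i 1) := by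
    simp only [lap]
    refine Finset.sum_congr rfl fun i _ => ?_
    rw [iteratedFDeriv_two_apply]
    simp
  have hkeysum := Finset.sum_nonneg (fun i (_ : i ∈ Finset.univ) => key i)
  have hsplit : ∑ i, (Gf2 p b C (‖x₀‖ ^ 2) * (2 * x₀ i) ^ 2 + Gf1 p b C (‖x₀‖ ^ 2) * 2)
      = 4 * ‖x₀‖ ^ 2 * Gf2 p b C (‖x₀‖ ^ 2) + 2 * N * Gf1 p b C (‖x₀‖ ^ 2) := by
    rw [Finset.sum_add_distrib, Finset.sum_const, Finset.card_univ, Fintype.card_fin]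
    have hterm : ∀ i : Fin N, Gf2 p b C (‖x₀‖ ^ 2) * (2 * x₀ i) ^ 2
        = 4 * Gf2 p b C (‖x₀‖ ^ 2) * (x₀ i) ^ 2 := fun i => by ring
    rw [Finset.sum_congr rfl (fun i _ => hterm i), ← Finset.mul_sum, hsumsq, nsmul_eq_mul]
    push_cast
    ring
  have hid := Gf_identity N b C hr2pos
  rw [← hp_def, ← hlam_def] at hid
  have hwx₀eq : Gf p b C (‖x₀‖ ^ 2) = w x₀ := rfl
  have h1 : 0 ≤ (∑ i, fderiv ℝ (fderiv ℝ u) x₀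
        (EuclideanSpace.single i 1) (EuclideanSpace.single i 1))
      - t0 * ∑ i, (Gf2 p b C (‖x₀‖ ^ 2) * (2 * x₀ i) ^ 2 + Gf1 p b C (‖x₀‖ ^ 2) * 2) := by
    rw [Finset.mul_sum, ← Finset.sum_sub_distrib]
    exact hkeysum
  rw [hsplit, hid, hwx₀eq, ← hlapu] at h1
  have h2 : lap u x₀ ≤ -(V x₀ * u x₀) := by
    have := hu3 x₀ (hAΩ x₀ hx₀A)
    linarith
  have h3 : μ / ‖x₀‖ ^ 2 ≤ V x₀ := (div_le_iff₀ hr2pos).2 (by linarith [hAV x₀ hx₀A])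
  have h4 : μ / ‖x₀‖ ^ 2 * u x₀ ≤ V x₀ * u x₀ := mul_le_mul_of_nonneg_right h3 hux₀.le
  have h5 : u x₀ = t0 * w x₀ := ht0w.symm
  rw [h5] at h2 h4
  have h6 : t0 * (-lam * w x₀ / ‖x₀‖ ^ 2) = -(t0 * lam * w x₀ / ‖x₀‖ ^ 2) := by ring
  have h7 : μ / ‖x₀‖ ^ 2 * (t0 * w x₀) - t0 * lam * w x₀ / ‖x₀‖ ^ 2
      = t0 * w x₀ * (μ - lam) / ‖x₀‖ ^ 2 := by ring
  have h8 : 0 < t0 * w x₀ * (μ - lam) / ‖x₀‖ ^ 2 :=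
    div_pos (mul_pos (mul_pos ht0pos hwx₀) (by linarith)) hr2pos
  linarith [h1, h2, h4, h6, h7, h8]
end

section
/- Let N ≥ 3, μ > 0 and α < 2. Then the problem -Δu = μ|x|^{-α} u in ℝ^N \ B_ℓ(0), u ≥ 0 on ∂B_ℓ(0), admits no positive supersolution for any ℓ > 0. -/
open Real Filter Metric Bornology

lemma second_deriv_test {g g' g'' : ℝ → ℝ}
    (h1 : ∀ᶠ t in nhds (0:ℝ), HasDerivAt g (g' t) t)
    (h2 : ∀ᶠ t in nhds (0:ℝ), HasDerivAt g' (g'' t) t)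
    (hc : ContinuousAt g'' 0)
    (hmax : IsLocalMax g 0) : g'' 0 ≤ 0 := by
  by_contra hpos
  push_neg at hpos
  have hg'0 : g' 0 = 0 := by
    have h := hmax.deriv_eq_zero
    rwa [h1.self_of_nhds.deriv] at h
  have hev : ∀ᶠ t in nhds (0:ℝ),
      HasDerivAt g (g' t) t ∧ HasDerivAt g' (g'' t) t ∧ 0 < g'' t :=
    h1.and (h2.and (hc (Ioi_mem_nhds hpos)))
  obtain ⟨δ, hδ, hball⟩ := Metric.eventually_nhds_iff.1 hev
  have hmem : ∀ t : ℝ, |t| ≤ δ/2 → (HasDerivAt g (g' t) t ∧ HasDerivAt g' (g'' t) t ∧ 0 < g'' t) := by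
    intro t ht
    apply hball
    rw [Real.dist_eq, sub_zero]
    linarith
  have habs : ∀ t : ℝ, t ∈ Set.Icc (-(δ/2)) (δ/2) → |t| ≤ δ/2 := by
    intro t ht; rw [abs_le]; exact ⟨ht.1, ht.2⟩
  have hmono' : StrictMonoOn g' (Set.Icc (-(δ/2)) (δ/2)) := by
    apply strictMonoOn_of_deriv_pos (convex_Icc _ _)
    · intro t ht
      exact (hmem t (habs t ht)).2.1.continuousAt.continuousWithinAt
    · intro t ht
      rw [interior_Icc] at ht
      have h := hmem t (habs t (Set.mem_Icc_of_Ioo ht))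
      rw [h.2.1.deriv]
      exact h.2.2
  have hg'pos : ∀ t : ℝ, 0 < t → t ≤ δ/2 → 0 < g' t := by
    intro t ht htδ
    have h := hmono' (show (0:ℝ) ∈ Set.Icc (-(δ/2)) (δ/2) from Set.mem_Icc.2 ⟨by linarith, by linarith⟩)
      (show t ∈ Set.Icc (-(δ/2)) (δ/2) from Set.mem_Icc.2 ⟨by linarith, htδ⟩) ht
    rwa [hg'0] at h
  have hmono : StrictMonoOn g (Set.Icc 0 (δ/2)) := by
    apply strictMonoOn_of_deriv_pos (convex_Icc _ _)
    · intro t ht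
      have : |t| ≤ δ/2 := by rw [abs_le]; constructor <;> [linarith [ht.1]; exact ht.2]
      exact (hmem t this).1.continuousAt.continuousWithinAt
    · intro t ht
      rw [interior_Icc] at ht
      have : |t| ≤ δ/2 := by rw [abs_le]; constructor <;> [linarith [ht.1.le]; exact ht.2.le]
      rw [(hmem t this).1.deriv]
      exact hg'pos t ht.1 ht.2.le
  obtain ⟨ε, hε, hbal2⟩ := Metric.eventually_nhds_iff.1 hmax
  set t0 := min (δ/2) (ε/2) with ht0
  have h0t : 0 < t0 := lt_min (by linarith) (by linarith)
  have h1t : t0 ≤ δ/2 := min_le_left _ _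
  have hlt : g 0 < g t0 :=
    hmono (show (0:ℝ) ∈ Set.Icc 0 (δ/2) from Set.mem_Icc.2 ⟨le_refl _, by linarith⟩)
      (show t0 ∈ Set.Icc 0 (δ/2) from Set.mem_Icc.2 ⟨h0t.le, h1t⟩) h0t
  have hle : g t0 ≤ g 0 := by
    apply hbal2
    rw [Real.dist_eq, sub_zero, abs_of_pos h0t]
    have : t0 ≤ ε/2 := min_le_right _ _
    linarith
  linarith

noncomputable def ff (m ω a r : ℝ) : ℝ := r ^ (-m) * sin (ω * (r - a))
noncomputable def ff1 (m ω a r : ℝ) : ℝ :=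
  (-m) * r ^ (-m-1) * sin (ω*(r-a)) + ω * r ^ (-m) * cos (ω*(r-a))
noncomputable def ff2 (m ω a r : ℝ) : ℝ :=
  (m*(m+1)) * r ^ (-m-2) * sin (ω*(r-a)) - 2*m*ω * r ^ (-m-1) * cos (ω*(r-a))
    - ω^2 * r ^ (-m) * sin (ω*(r-a))

lemma hasDerivAt_inner_trig (ω a r : ℝ) : HasDerivAt (fun r => ω*(r-a)) ω r := by
  simpa using ((hasDerivAt_id r).sub_const a).const_mul ω

lemma hasDerivAt_ff {r : ℝ} (m ω a : ℝ) (hr : 0 < r) :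
    HasDerivAt (ff m ω a) (ff1 m ω a r) r := by
  have h1 : HasDerivAt (fun r : ℝ => r ^ (-m)) ((-m) * r ^ (-m-1)) r :=
    Real.hasDerivAt_rpow_const (Or.inl hr.ne')
  have h2 : HasDerivAt (fun r => sin (ω*(r-a))) (cos (ω*(r-a)) * ω) r :=
    (Real.hasDerivAt_sin _).comp r (hasDerivAt_inner_trig ω a r)
  have := h1.mul h2
  unfold ff ff1
  exact this.congr_deriv (by ring)

lemma hasDerivAt_ff1 {r : ℝ} (m ω a : ℝ) (hr : 0 < r) :
    HasDerivAt (ff1 m ω a) (ff2 m ω a r) r := by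
  have h1 : HasDerivAt (fun r : ℝ => r ^ (-m)) ((-m) * r ^ (-m-1)) r :=
    Real.hasDerivAt_rpow_const (Or.inl hr.ne')
  have h1' : HasDerivAt (fun r : ℝ => r ^ (-m-1)) ((-m-1) * r ^ (-m-2)) r := by
    have := Real.hasDerivAt_rpow_const (x := r) (p := -m-1) (Or.inl hr.ne')
    rwa [show -m-1-1 = -m-2 by ring] at this
  have hs : HasDerivAt (fun r => sin (ω*(r-a))) (cos (ω*(r-a)) * ω) r :=
    (Real.hasDerivAt_sin _).comp r (hasDerivAt_inner_trig ω a r)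
  have hc : HasDerivAt (fun r => cos (ω*(r-a))) (-sin (ω*(r-a)) * ω) r :=
    (Real.hasDerivAt_cos _).comp r (hasDerivAt_inner_trig ω a r)
  have := ((h1'.const_mul (-m)).mul hs).add ((h1.const_mul ω).mul hc)
  unfold ff1 ff2
  exact this.congr_deriv (by ring)

noncomputable def FF (m ω a s : ℝ) : ℝ := ff m ω a (Real.sqrt s)
noncomputable def FF1 (m ω a s : ℝ) : ℝ := ff1 m ω a (Real.sqrt s) / (2 * Real.sqrt s)
noncomputable def FF2 (m ω a s : ℝ) : ℝ :=
  (ff2 m ω a (Real.sqrt s) - ff1 m ω a (Real.sqrt s) / Real.sqrt s) / (4 * s)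

lemma hasDerivAt_FF {s : ℝ} (m ω a : ℝ) (hs : 0 < s) :
    HasDerivAt (FF m ω a) (FF1 m ω a s) s := by
  have h := (hasDerivAt_ff m ω a (Real.sqrt_pos.2 hs)).comp s (Real.hasDerivAt_sqrt hs.ne')
  unfold FF FF1
  exact h.congr_deriv (by ring)

lemma hasDerivAt_FF1 {s : ℝ} (m ω a : ℝ) (hs : 0 < s) :
    HasDerivAt (FF1 m ω a) (FF2 m ω a s) s := by
  have hsq : Real.sqrt s ≠ 0 := (Real.sqrt_pos.2 hs).ne'
  have hnum : HasDerivAt (fun s => ff1 m ω a (Real.sqrt s))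
      (ff2 m ω a (Real.sqrt s) * (1 / (2 * Real.sqrt s))) s :=
    (hasDerivAt_ff1 m ω a (Real.sqrt_pos.2 hs)).comp s (Real.hasDerivAt_sqrt hs.ne')
  have hden : HasDerivAt (fun s : ℝ => 2 * Real.sqrt s) (2 * (1 / (2 * Real.sqrt s))) s :=
    (Real.hasDerivAt_sqrt hs.ne').const_mul 2
  have h := hnum.div hden (by positivity)
  unfold FF1 FF2
  refine h.congr_deriv ?_
  symm
  have h2 : Real.sqrt s ^ 2 = s := Real.sq_sqrt hs.le
  have h4 : Real.sqrt s ^ 4 = s ^ 2 := by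
    calc Real.sqrt s ^ 4 = (Real.sqrt s ^ 2) ^ 2 := by ring
    _ = s ^ 2 := by rw [h2]
  have h3 : Real.sqrt s ^ 3 = Real.sqrt s * s := by
    calc Real.sqrt s ^ 3 = Real.sqrt s ^ 2 * Real.sqrt s := by ring
    _ = Real.sqrt s * s := by rw [h2]; ring
  field_simp
  ring_nf
  rw [h3]
  linear_combination (-4 * ff1 m ω a (Real.sqrt s)) * h2

lemma continuousAt_ff1 {r : ℝ} (m ω a : ℝ) (hr : 0 < r) : ContinuousAt (ff1 m ω a) r :=
  (hasDerivAt_ff1 m ω a hr).continuousAt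

lemma continuousAt_ff2 {r : ℝ} (m ω a : ℝ) (hr : 0 < r) : ContinuousAt (ff2 m ω a) r := by
  have hp : ∀ p : ℝ, ContinuousAt (fun r : ℝ => r ^ p) r :=
    fun p => Real.continuousAt_rpow_const r p (Or.inl hr.ne')
  have htrig : Continuous fun r : ℝ => ω*(r-a) := by continuity
  unfold ff2
  exact (((continuousAt_const.mul (hp _)).mul
      ((Real.continuous_sin.comp htrig).continuousAt)).sub
    ((continuousAt_const.mul (hp _)).mul
      ((Real.continuous_cos.comp htrig).continuousAt))).sub
    ((continuousAt_const.mul (hp _)).mul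
      ((Real.continuous_sin.comp htrig).continuousAt))

lemma continuousAt_FF1 {s : ℝ} (m ω a : ℝ) (hs : 0 < s) : ContinuousAt (FF1 m ω a) s :=
  (hasDerivAt_FF1 m ω a hs).continuousAt

lemma continuousAt_FF2 {s : ℝ} (m ω a : ℝ) (hs : 0 < s) : ContinuousAt (FF2 m ω a) s := by
  have hr : 0 < Real.sqrt s := Real.sqrt_pos.2 hs
  have hsqrt : ContinuousAt Real.sqrt s := Real.continuous_sqrt.continuousAt
  unfold FF2
  exact (((continuousAt_ff2 m ω a hr).comp hsqrt).sub
      (((continuousAt_ff1 m ω a hr).comp hsqrt).div hsqrt hr.ne')).div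
    (continuousAt_const.mul continuousAt_id) (by positivity)

lemma lap_radial_eq (n m ω a s : ℝ) (hs : 0 < s) :
    2*n*FF1 m ω a s + 4*s*FF2 m ω a s
      = ff2 m ω a (Real.sqrt s) + ((n-1)/Real.sqrt s) * ff1 m ω a (Real.sqrt s) := by
  have hr : Real.sqrt s ≠ 0 := (Real.sqrt_pos.2 hs).ne'
  unfold FF1 FF2
  field_simp
  ring

lemma ode_pos (n μ α ω a r : ℝ) (hr : 0 < r)
    (hS : 0 < sin (ω*(r-a)))
    (hgap : ω^2 + (((n-1)/2) * (n-2-(n-1)/2))/r^2 < μ * r ^ (-α)) :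
    0 < ff2 ((n-1)/2) ω a r + ((n-1)/r) * ff1 ((n-1)/2) ω a r
        + μ * r ^ (-α) * ff ((n-1)/2) ω a r := by
  have e1 : r ^ (-((n-1)/2)-1) = r ^ (-((n-1)/2)) * r⁻¹ := by
    rw [show -((n-1)/2)-1 = -((n-1)/2) + (-1) by ring, Real.rpow_add hr, Real.rpow_neg_one]
  have e2 : r ^ (-((n-1)/2)-2) = r ^ (-((n-1)/2)) * (r^2)⁻¹ := by
    rw [show -((n-1)/2)-2 = -((n-1)/2) + (-2) by ring, Real.rpow_add hr]
    congr 1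
    rw [show (-2:ℝ) = -((2:ℕ):ℝ) by norm_num, Real.rpow_neg hr.le, Real.rpow_natCast]
  have key : ff2 ((n-1)/2) ω a r + ((n-1)/r) * ff1 ((n-1)/2) ω a r
        + μ * r ^ (-α) * ff ((n-1)/2) ω a r
      = r ^ (-((n-1)/2)) * sin (ω*(r-a))
          * (μ * r ^ (-α) - (((n-1)/2)*(n-2-(n-1)/2))/r^2 - ω^2) := by
    unfold ff ff1 ff2
    rw [e1, e2]
    field_simp
    ring
  rw [key]
  have h1 : (0:ℝ) < r ^ (-((n-1)/2)) := Real.rpow_pos_of_pos hr _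
  have h2 : 0 < μ * r^(-α) - ((n-1)/2)*(n-2-(n-1)/2)/r^2 - ω^2 := by linarith
  exact mul_pos (mul_pos h1 hS) h2

section SecC
open RealInnerProductSpace in
lemma euclid_aux : True := trivial

variable {N : ℕ}

lemma hasFDerivAt_normsq (x : EuclideanSpace ℝ (Fin N)) :
    HasFDerivAt (fun y : EuclideanSpace ℝ (Fin N) => ‖y‖^2) ((2:ℝ) • innerSL ℝ x) x := by
  have h := (hasFDerivAt_id x).inner ℝ (hasFDerivAt_id x)
  simp only [real_inner_self_eq_norm_sq] at h
  refine h.congr_fderiv ?_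
  ext v
  simp [real_inner_comm (x := x)]
  ring

noncomputable def inn2 (N : ℕ) :
    EuclideanSpace ℝ (Fin N) →L[ℝ] (EuclideanSpace ℝ (Fin N) →L[ℝ] ℝ) := innerSL ℝ

@[simp] lemma inn2_apply (x v : EuclideanSpace ℝ (Fin N)) : inn2 N x v = inner ℝ x v := rfl

noncomputable def ww (m ω a : ℝ) (x : EuclideanSpace ℝ (Fin N)) : ℝ := FF m ω a (‖x‖^2)

noncomputable def Dw (m ω a : ℝ) (x : EuclideanSpace ℝ (Fin N)) :
    EuclideanSpace ℝ (Fin N) →L[ℝ] ℝ :=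
  (2 * FF1 m ω a (‖x‖^2)) • innerSL ℝ x

noncomputable def D2w (m ω a : ℝ) (x : EuclideanSpace ℝ (Fin N)) :
    EuclideanSpace ℝ (Fin N) →L[ℝ] (EuclideanSpace ℝ (Fin N) →L[ℝ] ℝ) :=
  (2 * FF1 m ω a (‖x‖^2)) • inn2 N
    + ((4 * FF2 m ω a (‖x‖^2)) • innerSL ℝ x).smulRight (innerSL ℝ x)

lemma Dw_apply (m ω a : ℝ) (x v : EuclideanSpace ℝ (Fin N)) :
    Dw m ω a x v = 2 * FF1 m ω a (‖x‖^2) * inner ℝ x v := by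
  simp [Dw]

lemma D2w_apply (m ω a : ℝ) (x v u : EuclideanSpace ℝ (Fin N)) :
    D2w m ω a x v u = 2 * FF1 m ω a (‖x‖^2) * (inner ℝ v u : ℝ)
      + 4 * FF2 m ω a (‖x‖^2) * (inner ℝ x v : ℝ) * (inner ℝ x u : ℝ) := by
  simp [D2w, inn2_apply]

lemma hasFDerivAt_ww {x : EuclideanSpace ℝ (Fin N)} (m ω a : ℝ) (hx : x ≠ 0) :
    HasFDerivAt (ww m ω a) (Dw m ω a x) x := by
  have hq2 : (0:ℝ) < ‖x‖^2 := pow_pos (norm_pos_iff.2 hx) 2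
  have h := (hasDerivAt_FF m ω a hq2).comp_hasFDerivAt x (hasFDerivAt_normsq x)
  unfold ww Dw
  refine h.congr_fderiv ?_
  rw [smul_smul, mul_comm]

lemma hasFDerivAt_Dw {x : EuclideanSpace ℝ (Fin N)} (m ω a : ℝ) (hx : x ≠ 0) :
    HasFDerivAt (Dw m ω a) (D2w m ω a x) x := by
  have hq2 : (0:ℝ) < ‖x‖^2 := pow_pos (norm_pos_iff.2 hx) 2
  have hc : HasFDerivAt (fun y : EuclideanSpace ℝ (Fin N) => 2 * FF1 m ω a (‖y‖^2))
      ((2:ℝ) • (FF2 m ω a (‖x‖^2) • ((2:ℝ) • innerSL ℝ x))) x :=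
    by have := ((hasDerivAt_FF1 m ω a hq2).comp_hasFDerivAt x (hasFDerivAt_normsq x)).const_mul 2; exact this
  have hT : HasFDerivAt
      (fun y : EuclideanSpace ℝ (Fin N) => (innerSL ℝ y : EuclideanSpace ℝ (Fin N) →L[ℝ] ℝ))
      (inn2 N) x :=
    (inn2 N).hasFDerivAt
  have h := hc.smul hT
  unfold Dw D2w
  refine h.congr_fderiv ?_
  ext v u
  simp
  exact Or.inl (by ring)
end SecC

lemma param_choice (μ α ℓ K : ℝ) (hμ : 0 < μ) (hα : α < 2) (hℓ : 0 < ℓ) (hK : 0 ≤ K) :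
    ∃ a ω : ℝ, ℓ < a ∧ 0 < ω ∧ a + π/ω ≤ 2*a ∧
      ∀ r, a ≤ r → r ≤ a + π/ω → ω^2 + K/r^2 < μ * r ^ (-α) := by
  set d : ℝ := min 1 ((2:ℝ) ^ (-α)) with hd_def
  have hd : 0 < d := lt_min one_pos (Real.rpow_pos_of_pos two_pos _)
  have hd1 : d ≤ 1 := min_le_left _ _
  have hd2 : d ≤ (2:ℝ)^(-α) := min_le_right _ _
  set C₁ : ℝ := max (max (2*π^2/(μ*d)) ((2*K+1)/(μ*d))) 1 with hC₁_def
  have hC₁ : 0 < C₁ := lt_of_lt_of_le one_pos (le_max_right _ _)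
  have hCπ : 2*π^2/(μ*d) ≤ C₁ := le_trans (le_max_left _ _) (le_max_left _ _)
  have hCK : (2*K+1)/(μ*d) ≤ C₁ := le_trans (le_max_right _ _) (le_max_left _ _)
  set a : ℝ := max (ℓ+1) (C₁ ^ (2-α)⁻¹) with ha_def
  have hℓa : ℓ < a := lt_of_lt_of_le (by linarith) (le_max_left _ _)
  have ha : 0 < a := hℓ.trans hℓa
  have haC : C₁ ≤ a ^ (2-α) := by
    have h1 : C₁ ^ (2-α)⁻¹ ≤ a := le_max_right _ _
    have h2 : (C₁ ^ (2-α)⁻¹) ^ (2-α) ≤ a ^ (2-α) :=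
      Real.rpow_le_rpow (Real.rpow_nonneg hC₁.le _) h1 (by linarith)
    rwa [Real.rpow_inv_rpow hC₁.le (by linarith : (2:ℝ)-α ≠ 0)] at h2
  clear_value d C₁ a
  set ω : ℝ := Real.sqrt (μ * d * a ^ (-α) / 2) with hω_def
  have hapos : (0:ℝ) < a ^ (-α) := Real.rpow_pos_of_pos ha _
  have hω2 : ω^2 = μ * d * a ^ (-α) / 2 := Real.sq_sqrt (by positivity)
  have hω : 0 < ω := Real.sqrt_pos.2 (by positivity)
  clear_value ω
  have h2mα : a ^ ((2:ℝ)-α) = a^2 * a ^ (-α) := by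
    rw [show (2:ℝ)-α = -α + 2 by ring, Real.rpow_add ha, mul_comm]
    congr 1
    rw [show ((2:ℝ):ℝ) = ((2:ℕ):ℝ) by norm_num, Real.rpow_natCast]
  have hπab : a + π/ω ≤ 2*a := by
    have h2 : 2*π^2/(μ*d) ≤ a^(2-α) := hCπ.trans haC
    have h3 : 2*π^2 ≤ μ * d * a^(2-α) := by
      rw [div_le_iff₀ (by positivity)] at h2
      linarith [h2]
    have hsq : π^2 ≤ (a*ω)^2 := by
      have : (a*ω)^2 = (μ*d*a^(2-α))/2 := by rw [mul_pow, hω2, h2mα]; ring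
      rw [this]; linarith
    have hπ : π ≤ a * ω := by
      calc π = Real.sqrt (π^2) := (Real.sqrt_sq Real.pi_pos.le).symm
      _ ≤ Real.sqrt ((a*ω)^2) := Real.sqrt_le_sqrt hsq
      _ = a*ω := Real.sqrt_sq (by positivity)
    have : π/ω ≤ a := by rw [div_le_iff₀ hω]; linarith
    linarith
  refine ⟨a, ω, hℓa, hω, hπab, ?_⟩
  intro r har harb
  have hrpos : 0 < r := ha.trans_le har
  have hr2a : r ≤ 2*a := by linarith
  have hdbound : d * a ^ (-α) ≤ r ^ (-α) := by
    rcases le_or_gt α 0 with hα0 | hα0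
    · have h1 : a ^ (-α) ≤ r ^ (-α) := Real.rpow_le_rpow ha.le har (by linarith)
      have h2 := mul_le_mul_of_nonneg_right hd1 hapos.le
      rw [one_mul] at h2
      linarith
    · have h1 : (2*a) ^ (-α) ≤ r ^ (-α) :=
        Real.rpow_le_rpow_of_nonpos hrpos hr2a (by linarith)
      have h2 : ((2:ℝ)*a) ^ (-α) = (2:ℝ)^(-α) * a^(-α) :=
        Real.mul_rpow (by norm_num) ha.le
      have h3 := mul_le_mul_of_nonneg_right hd2 hapos.le
      rw [← h2] at h3
      linarith
  have hμr : 2*ω^2 ≤ μ * r ^ (-α) := by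
    rw [hω2]
    have h5 := mul_le_mul_of_nonneg_left hdbound hμ.le
    calc 2*(μ * d * a^(-α)/2) = μ * (d * a^(-α)) := by ring
    _ ≤ μ * r^(-α) := h5
  have hKr : K/r^2 < ω^2 := by
    have h1 : (2*K+1)/(μ*d) ≤ a^(2-α) := hCK.trans haC
    have h2 : 2*K+1 ≤ μ * d * a^(2-α) := by
      rw [div_le_iff₀ (by positivity)] at h1
      linarith
    have h3 : K/r^2 ≤ K/a^2 :=
      div_le_div_of_nonneg_left hK (by positivity) (pow_le_pow_left₀ ha.le har 2)
    have h4 : K/a^2 < ω^2 := by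
      rw [div_lt_iff₀ (by positivity)]
      have h5 : ω^2 * a^2 = μ * d * a^(2-α)/2 := by
        rw [hω2, h2mα]; ring
      rw [h5]
      linarith
    linarith
  linarith

set_option maxHeartbeats 2000000 in
theorem stmt6 (N : ℕ) (hN : 3 ≤ N) (μ α : ℝ) (hμ : 0 < μ) (hα : α < 2)
    (ℓ : ℝ) (hℓ : 0 < ℓ) :
    ¬ ∃ u : EuclideanSpace ℝ (Fin N) → ℝ,
        ContDiffOn ℝ 2 u {x | ℓ < ‖x‖} ∧
        (∀ x : EuclideanSpace ℝ (Fin N), ℓ < ‖x‖ → 0 < u x) ∧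
        (∀ x : EuclideanSpace ℝ (Fin N), ℓ < ‖x‖ →
          μ * ‖x‖ ^ (-α) * u x ≤ -lap u x) := by
  rintro ⟨u, hu, hupos, hsuper⟩
  classical
  set n : ℝ := (N : ℝ) with hn_def
  have hn3 : (3:ℝ) ≤ n := by rw [hn_def]; exact_mod_cast hN
  set m : ℝ := (n-1)/2 with hm_def
  set K : ℝ := m * (n-2-m) with hK_def
  have hK : 0 ≤ K := by rw [hK_def, hm_def]; nlinarith
  obtain ⟨a, ω, hℓa, hω, hb2a, hgap⟩ := param_choice μ α ℓ K hμ hα hℓ hK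
  set b : ℝ := a + π/ω with hb_def
  have ha : 0 < a := hℓ.trans hℓa
  have hπω : 0 < π/ω := div_pos Real.pi_pos hω
  have hab : a < b := by rw [hb_def]; linarith
  -- sets
  set sl : Set (EuclideanSpace ℝ (Fin N)) := {x | ℓ < ‖x‖} with hsl_def
  have hsopen : IsOpen sl := isOpen_lt continuous_const continuous_norm
  set A : Set (EuclideanSpace ℝ (Fin N)) := {x | a ≤ ‖x‖ ∧ ‖x‖ ≤ b} with hA_def
  have hAsub : A ⊆ sl := fun x hx => lt_of_lt_of_le hℓa hx.1
  have hApos : ∀ x ∈ A, (0:ℝ) < ‖x‖ := fun x hx => ha.trans_le hx.1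
  have hAne0 : ∀ x ∈ sl, x ≠ 0 := by
    intro x hx h0
    rw [h0] at hx
    simp only [hsl_def, Set.mem_setOf_eq, norm_zero] at hx
    linarith
  have hAclosed : IsClosed A := by
    have hset : A = (fun x : EuclideanSpace ℝ (Fin N) => ‖x‖) ⁻¹' (Set.Icc a b) := by
      ext x; simp [hA_def, Set.mem_Icc]
    rw [hset]
    exact isClosed_Icc.preimage continuous_norm
  have hAcompact : IsCompact A := by
    apply (isCompact_closedBall (0 : EuclideanSpace ℝ (Fin N)) b).of_isClosed_subset hAclosed
    intro x hx
    simpa [Metric.mem_closedBall, dist_eq_norm] using hx.2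
  -- center point
  have hNpos : 0 < N := by omega
  set c : ℝ := a + π/(2*ω) with hc_def
  have h2ω : 0 < π/(2*ω) := by positivity
  have hhalf : π/(2*ω) + π/(2*ω) = π/ω := by field_simp; ring
  have hca : a < c := by rw [hc_def]; linarith
  have hcb : c < b := by rw [hc_def, hb_def]; linarith
  set xc : EuclideanSpace ℝ (Fin N) := c • EuclideanSpace.single ⟨0, hNpos⟩ (1:ℝ) with hxc_def
  have hxcnorm : ‖xc‖ = c := by
    rw [hxc_def, norm_smul, EuclideanSpace.norm_single, norm_one, mul_one,
      Real.norm_eq_abs, abs_of_pos (ha.trans hca)]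
  have hxcA : xc ∈ A := by
    constructor <;> rw [hxcnorm] <;> [exact hca.le; exact hcb.le]
  -- w and the maximization
  have hwr : ∀ x : EuclideanSpace ℝ (Fin N), ww m ω a x = ff m ω a ‖x‖ := by
    intro x
    rw [ww, FF, Real.sqrt_sq (norm_nonneg x)]
  have hwcont : ContinuousOn (ww m ω a) A := by
    intro x hx
    have hq2 : (0:ℝ) < ‖x‖^2 := by have := hApos x hx; positivity
    have h1 : ContinuousAt (FF m ω a) (‖x‖^2) := (hasDerivAt_FF m ω a hq2).continuousAt
    have h2 : ContinuousAt (fun y : EuclideanSpace ℝ (Fin N) => ‖y‖^2) x :=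
      (continuous_norm.pow 2).continuousAt
    have h3 : ContinuousAt (ww m ω a) x := Filter.Tendsto.comp h1 h2
    exact h3.continuousWithinAt
  have hucont : ContinuousOn u sl := hu.continuousOn
  set φ : EuclideanSpace ℝ (Fin N) → ℝ := fun x => ww m ω a x / u x with hφ_def
  have hφcont : ContinuousOn φ A :=
    hwcont.div (hucont.mono hAsub) (fun x hx => (hupos x (hAsub hx)).ne')
  obtain ⟨x0, hx0A, hx0max⟩ := hAcompact.exists_isMaxOn ⟨xc, hxcA⟩ hφcont
  set t : ℝ := φ x0 with ht_def
  have hux0 : 0 < u x0 := hupos _ (hAsub hx0A)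
  have hwxc : 0 < ww m ω a xc := by
    rw [hwr, hxcnorm]
    have harg : ω * (c - a) = π/2 := by
      rw [hc_def]
      field_simp
      ring
    rw [ff, harg, Real.sin_pi_div_two]
    have := Real.rpow_pos_of_pos (ha.trans hca) (-m)
    linarith
  have ht : 0 < t := by
    have h1 : φ xc ≤ φ x0 := hx0max hxcA
    have h2 : 0 < φ xc := div_pos hwxc (hupos _ (hAsub hxcA))
    linarith
  have hwu : ∀ x ∈ A, ww m ω a x ≤ t * u x := by
    intro x hx
    have h1 : φ x ≤ t := hx0max hx
    have h2 : 0 < u x := hupos _ (hAsub hx)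
    rw [hφ_def] at h1
    calc ww m ω a x = (ww m ω a x / u x) * u x := by field_simp
    _ ≤ t * u x := mul_le_mul_of_nonneg_right h1 h2.le
  have hwx0 : ww m ω a x0 = t * u x0 := by
    rw [ht_def, hφ_def]
    field_simp
  have hwx0pos : 0 < ww m ω a x0 := by
    rw [hwx0]; exact mul_pos ht hux0
  -- x0 is interior
  have hr0 : a < ‖x0‖ ∧ ‖x0‖ < b := by
    have hbd := hx0A
    rcases eq_or_lt_of_le hbd.1 with heq | hlt
    · exfalso
      have : ww m ω a x0 = 0 := by
        rw [hwr, ← heq, ff, sub_self, mul_zero, Real.sin_zero, mul_zero]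
      linarith
    rcases eq_or_lt_of_le hbd.2 with heq2 | hlt2
    · exfalso
      have harg : ω * (b - a) = π := by
        rw [hb_def]
        field_simp
        ring
      have : ww m ω a x0 = 0 := by
        rw [hwr, heq2, ff, harg, Real.sin_pi, mul_zero]
      linarith
    exact ⟨hlt, hlt2⟩
  have hx0sl : x0 ∈ sl := hAsub hx0A
  have hr0pos : 0 < ‖x0‖ := ha.trans hr0.1
  -- local max of g
  set g : EuclideanSpace ℝ (Fin N) → ℝ := fun x => ww m ω a x - t * u x with hg_def
  have hgmax : IsLocalMax g x0 := by
    have hU : IsOpen {x : EuclideanSpace ℝ (Fin N) | a < ‖x‖ ∧ ‖x‖ < b} :=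
      (isOpen_lt continuous_const continuous_norm).inter
        (isOpen_lt continuous_norm continuous_const)
    filter_upwards [hU.mem_nhds hr0] with x hx
    have hxA : x ∈ A := ⟨hx.1.le, hx.2.le⟩
    have := hwu x hxA
    simp only [hg_def]
    rw [hwx0]
    linarith
  -- derivatives of u
  set u1 : EuclideanSpace ℝ (Fin N) → (EuclideanSpace ℝ (Fin N) →L[ℝ] ℝ) :=
    fderiv ℝ u with hu1_def
  set u2 : EuclideanSpace ℝ (Fin N) →
      (EuclideanSpace ℝ (Fin N) →L[ℝ] (EuclideanSpace ℝ (Fin N) →L[ℝ] ℝ)) :=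
    fderiv ℝ u1 with hu2_def
  have hu1 : ∀ y ∈ sl, HasFDerivAt u (u1 y) y := by
    intro y hy
    exact ((hu.differentiableOn (by norm_num)).differentiableAt
      (hsopen.mem_nhds hy)).hasFDerivAt
  have hu1cd : ContDiffOn ℝ 1 u1 sl := hu.fderiv_of_isOpen hsopen (by norm_num)
  have hu2 : ∀ y ∈ sl, HasFDerivAt u1 (u2 y) y := by
    intro y hy
    exact ((hu1cd.differentiableOn (by norm_num)).differentiableAt
      (hsopen.mem_nhds hy)).hasFDerivAt
  have hu2cont : ContinuousOn u2 sl :=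
    hu1cd.continuousOn_fderiv_of_isOpen hsopen (by norm_num)
  have hlapu : lap u x0 = ∑ i, u2 x0 (EuclideanSpace.single i 1) (EuclideanSpace.single i 1) := by
    rw [lap]
    congr 1
    funext i
    rw [iteratedFDeriv_two_apply]
    simp [hu2_def, hu1_def]
  -- second derivative test in each direction
  have hkey : ∀ i : Fin N,
      D2w m ω a x0 (EuclideanSpace.single i 1) (EuclideanSpace.single i 1)
        - t * u2 x0 (EuclideanSpace.single i 1) (EuclideanSpace.single i 1) ≤ 0 := by
    intro i
    set ei : EuclideanSpace ℝ (Fin N) := EuclideanSpace.single i 1 with hei_def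
    set ψ : ℝ → EuclideanSpace ℝ (Fin N) := fun s => x0 + s • ei with hψ_def
    have hψ : ∀ s : ℝ, HasDerivAt ψ ei s := by
      intro s
      have h := ((hasDerivAt_id s).smul_const ei).const_add x0
      exact h.congr_deriv (one_smul _ _)
    have hψc : Continuous ψ := by
      rw [hψ_def]
      exact continuous_const.add (continuous_id.smul continuous_const)
    have hψ0 : ψ 0 = x0 := by simp [hψ_def]
    have hev : ∀ᶠ s : ℝ in nhds 0, ψ s ∈ sl := by
      have hmem : sl ∈ nhds (ψ 0) := by rw [hψ0]; exact hsopen.mem_nhds hx0sl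
      exact hψc.continuousAt.preimage_mem_nhds hmem
    set G1 : EuclideanSpace ℝ (Fin N) → (EuclideanSpace ℝ (Fin N) →L[ℝ] ℝ) :=
      fun y => Dw m ω a y - t • u1 y with hG1_def
    set G2 : EuclideanSpace ℝ (Fin N) →
        (EuclideanSpace ℝ (Fin N) →L[ℝ] (EuclideanSpace ℝ (Fin N) →L[ℝ] ℝ)) :=
      fun y => D2w m ω a y - t • u2 y with hG2_def
    have hG1 : ∀ y ∈ sl, HasFDerivAt g (G1 y) y := by
      intro y hy
      exact (hasFDerivAt_ww m ω a (hAne0 y hy)).sub ((hu1 y hy).const_mul t)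
    have hG2 : ∀ y ∈ sl, HasFDerivAt G1 (G2 y) y := by
      intro y hy
      exact (hasFDerivAt_Dw m ω a (hAne0 y hy)).sub ((hu2 y hy).const_smul t)
    set p1 : ℝ → ℝ := fun s => G1 (ψ s) ei with hp1_def
    set p2 : ℝ → ℝ := fun s => G2 (ψ s) ei ei with hp2_def
    have h1 : ∀ᶠ s : ℝ in nhds 0, HasDerivAt (fun s => g (ψ s)) (p1 s) s := by
      filter_upwards [hev] with s hs
      exact (hG1 _ hs).comp_hasDerivAt s (hψ s)
    have h2 : ∀ᶠ s : ℝ in nhds 0, HasDerivAt p1 (p2 s) s := by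
      filter_upwards [hev] with s hs
      have happ := ((ContinuousLinearMap.apply ℝ ℝ ei).hasFDerivAt
        (x := G1 (ψ s))).comp (ψ s) (hG2 _ hs)
      have hd := happ.comp_hasDerivAt s (hψ s)
      exact hd
    have hc2 : ContinuousAt p2 0 := by
      have hwpart : ContinuousAt (fun s => D2w m ω a (ψ s) ei ei) 0 := by
        have hfe : (fun s => D2w m ω a (ψ s) ei ei)
            = fun s => 2 * FF1 m ω a (‖ψ s‖^2) * (inner ℝ ei ei : ℝ)
              + 4 * FF2 m ω a (‖ψ s‖^2) * (inner ℝ (ψ s) ei : ℝ) * (inner ℝ (ψ s) ei : ℝ) := by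
          funext s
          rw [D2w_apply]
        rw [hfe]
        have hq0 : (0:ℝ) < ‖ψ 0‖^2 := by rw [hψ0]; positivity
        have hnc : ContinuousAt (fun s => ‖ψ s‖^2) 0 :=
          ((continuous_norm.pow 2).comp hψc).continuousAt
        have hFF1c : ContinuousAt (fun s => FF1 m ω a (‖ψ s‖^2)) 0 :=
          Filter.Tendsto.comp (continuousAt_FF1 m ω a hq0) hnc
        have hFF2c : ContinuousAt (fun s => FF2 m ω a (‖ψ s‖^2)) 0 :=
          Filter.Tendsto.comp (continuousAt_FF2 m ω a hq0) hnc
        have hinnerc : Continuous (fun s => (inner ℝ (ψ s) ei : ℝ)) :=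
          (continuous_inner.comp (hψc.prodMk continuous_const))
        exact ((continuousAt_const.mul hFF1c).mul continuousAt_const).add
          (((continuousAt_const.mul hFF2c).mul hinnerc.continuousAt).mul hinnerc.continuousAt)
      have hupart : ContinuousAt (fun s => u2 (ψ s) ei ei) 0 := by
        have hcont : ContinuousOn (fun y => u2 y ei ei) sl :=
          (hu2cont.clm_apply continuousOn_const).clm_apply continuousOn_const
        have h5 : ContinuousAt (fun y => u2 y ei ei) x0 :=
          hcont.continuousAt (hsopen.mem_nhds hx0sl)
        rw [← hψ0] at h5
        exact h5.comp hψc.continuousAt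
      have hfe2 : p2 = fun s => D2w m ω a (ψ s) ei ei - t * u2 (ψ s) ei ei := by
        funext s
        simp [hp2_def, hG2_def]
      rw [hfe2]
      exact hwpart.sub (continuousAt_const.mul hupart)
    have hploc : IsLocalMax (fun s => g (ψ s)) 0 := by
      have htd : Filter.Tendsto ψ (nhds 0) (nhds x0) := by
        rw [← hψ0]; exact hψc.continuousAt
      have := htd.eventually hgmax
      filter_upwards [this] with s hs
      simpa [hψ0] using hs
    have hres := second_deriv_test h1 h2 hc2 hploc
    have hp20 : p2 0 = D2w m ω a x0 ei ei - t * u2 x0 ei ei := by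
      simp [hp2_def, hG2_def, hψ0]
    rw [hp20] at hres
    exact hres
  -- sum over directions
  have hsum : (∑ i, D2w m ω a x0 (EuclideanSpace.single i 1) (EuclideanSpace.single i 1))
      ≤ t * lap u x0 := by
    rw [hlapu, Finset.mul_sum]
    have := Finset.sum_le_sum (fun i (_ : i ∈ Finset.univ) => by
      have h := hkey i
      linarith : ∀ i ∈ Finset.univ,
        D2w m ω a x0 (EuclideanSpace.single i 1) (EuclideanSpace.single i 1)
          ≤ t * u2 x0 (EuclideanSpace.single i 1) (EuclideanSpace.single i 1))
    exact this
  -- compute the sum of D2w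
  have hnormsq : ‖x0‖^2 = ∑ i, (x0 i)^2 := by
    rw [EuclideanSpace.norm_eq, Real.sq_sqrt (by positivity)]
    congr 1
    funext i
    rw [Real.norm_eq_abs, sq_abs]
  have hlapw : (∑ i, D2w m ω a x0 (EuclideanSpace.single i 1) (EuclideanSpace.single i 1))
      = 2*n*FF1 m ω a (‖x0‖^2) + 4*(‖x0‖^2)*FF2 m ω a (‖x0‖^2) := by
    have hterm : ∀ i : Fin N,
        D2w m ω a x0 (EuclideanSpace.single i 1) (EuclideanSpace.single i 1)
          = 2 * FF1 m ω a (‖x0‖^2) + 4 * FF2 m ω a (‖x0‖^2) * (x0 i)^2 := by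
      intro i
      rw [D2w_apply]
      have h1 : (inner ℝ (EuclideanSpace.single i (1:ℝ)) (EuclideanSpace.single i (1:ℝ)) : ℝ) = 1 := by
        rw [EuclideanSpace.inner_single_left]
        simp [EuclideanSpace.single_apply]
      have h2 : (inner ℝ x0 (EuclideanSpace.single i (1:ℝ)) : ℝ) = x0 i := by
        rw [EuclideanSpace.inner_single_right]
        simp
      rw [h1, h2]
      ring
    simp only [hterm]
    rw [Finset.sum_add_distrib, Finset.sum_const, Finset.card_univ, Fintype.card_fin,
      ← Finset.mul_sum, ← hnormsq]
    push_cast [hn_def]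
    ring
  -- the radial identity
  have hid := lap_radial_eq n m ω a (‖x0‖^2) (by positivity)
  rw [Real.sqrt_sq (norm_nonneg x0)] at hid
  -- positivity of sin at x0
  have hsin : 0 < Real.sin (ω * (‖x0‖ - a)) := by
    have hw0 : 0 < ff m ω a ‖x0‖ := by rw [← hwr]; exact hwx0pos
    rw [ff] at hw0
    have hrp : 0 < ‖x0‖ ^ (-m) := Real.rpow_pos_of_pos hr0pos _
    by_contra hcon
    push_neg at hcon
    nlinarith
  -- the ODE strict inequality
  have hgap0 := hgap ‖x0‖ hr0.1.le hr0.2.le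
  have hODE := ode_pos n μ α ω a ‖x0‖ hr0pos hsin (by rw [← hm_def, ← hK_def]; exact hgap0)
  -- supersolution inequality at x0
  have hss := hsuper x0 hx0sl
  -- combine everything
  have hfinal1 : 2*n*FF1 m ω a (‖x0‖^2) + 4*(‖x0‖^2)*FF2 m ω a (‖x0‖^2)
      ≤ -(μ * ‖x0‖ ^ (-α) * (ww m ω a x0)) := by
    rw [← hlapw]
    calc (∑ i, D2w m ω a x0 (EuclideanSpace.single i 1) (EuclideanSpace.single i 1))
        ≤ t * lap u x0 := hsum
    _ ≤ t * (-(μ * ‖x0‖ ^ (-α) * u x0)) := by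
        apply mul_le_mul_of_nonneg_left _ ht.le
        linarith
    _ = -(μ * ‖x0‖ ^ (-α) * (t * u x0)) := by ring
    _ = -(μ * ‖x0‖ ^ (-α) * (ww m ω a x0)) := by rw [← hwx0]
  rw [hid, hwr] at hfinal1
  -- contradiction with hODE
  rw [hm_def] at hfinal1
  linarith
end

section
/- Let N ≥ 3, β ∈ ℝ, p < 1, τ ∈ ℝ. Then the problem -Δu ≥ |x|^β(ln|x|)^τ u^p in ℝ^N \ closure(B_e(0)), u ≥ 0 on ∂B_e(0), with β > -2, has no positive bounded supersolution. -/
open Real Filter Metric Bornology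

open Topology



lemma bridge {N : ℕ} (f : EuclideanSpace ℝ (Fin N) → ℝ) (z v : EuclideanSpace ℝ (Fin N))
    (hf : ContDiffAt ℝ 2 f z) :
    iteratedFDeriv ℝ 2 f z ![v, v] = deriv (deriv (fun t : ℝ => f (z + t • v))) 0 := by
  have hev : ∀ᶠ y in 𝓝 z, DifferentiableAt ℝ f y :=
    (hf.eventually (by norm_num)).mono fun y hy => hy.differentiableAt (by norm_num)
  have hφ : ∀ t : ℝ, HasDerivAt (fun t : ℝ => z + t • v) v t := by
    intro t
    simpa using ((hasDerivAt_id t).smul_const v).const_add z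
  have hφ0 : z + (0:ℝ) • v = z := by simp
  have hφc : ContinuousAt (fun t : ℝ => z + t • v) 0 := ((hφ 0).continuousAt)
  have hev2 : ∀ᶠ t : ℝ in 𝓝 0, DifferentiableAt ℝ f (z + t • v) := by
    have h := hφc
    rw [ContinuousAt, hφ0] at h
    exact h.eventually hev
  have hder : (deriv (fun s : ℝ => f (z + s • v))) =ᶠ[𝓝 (0:ℝ)]
      (fun t : ℝ => (fderiv ℝ f (z + t • v)) v) := by
    filter_upwards [hev2] with t ht
    exact (ht.hasFDerivAt.comp_hasDerivAt t (hφ t)).deriv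
  rw [iteratedFDeriv_two_apply]
  have h1 : deriv (deriv fun t : ℝ => f (z + t • v)) 0
      = deriv (fun t : ℝ => (fderiv ℝ f (z + t • v)) v) 0 := hder.deriv_eq
  rw [h1]
  have hfd : DifferentiableAt ℝ (fderiv ℝ f) z :=
    (hf.fderiv_right (m := 1) (by norm_num)).differentiableAt one_ne_zero
  have hfd' : HasFDerivAt (fderiv ℝ f) (fderiv ℝ (fderiv ℝ f) z) (z + (0:ℝ) • v) := by
    rw [hφ0]; exact hfd.hasFDerivAt
  have h2 : HasDerivAt (fun t : ℝ => fderiv ℝ f (z + t • v)) (fderiv ℝ (fderiv ℝ f) z v) 0 :=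
    hfd'.comp_hasDerivAt 0 (hφ 0)
  have h3 := (ContinuousLinearMap.apply ℝ ℝ v).hasFDerivAt.comp_hasDerivAt 0 h2
  simpa [Matrix.cons_val_zero, Matrix.cons_val_one, Function.comp_def] using h3.deriv.symm


lemma d2_nonneg {g : ℝ → ℝ} (hg : ContDiffAt ℝ 2 g 0) (hm : IsLocalMin g 0) :
    0 ≤ deriv (deriv g) 0 := by
  by_contra h
  push_neg at h
  have hg1 : ContDiffAt ℝ 1 (deriv g) 0 := by
    have hf2 : ContDiffAt ℝ 1 (fderiv ℝ g) 0 := hg.fderiv_right (m := 1) (by norm_num)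
    have hA : ContDiff ℝ 1 (fun L : ℝ →L[ℝ] ℝ => L 1) := (ContinuousLinearMap.apply ℝ ℝ (1:ℝ)).contDiff
    have h1 : ContDiffAt ℝ 1 (fun t => fderiv ℝ g t 1) 0 := hA.contDiffAt.comp 0 hf2
    have h2 : deriv g = fun t => fderiv ℝ g t 1 := funext fun t => (fderiv_apply_one_eq_deriv).symm
    rw [h2]
    exact h1
  have hd : HasDerivAt (deriv g) (deriv (deriv g) 0) 0 :=
    (hg1.differentiableAt one_ne_zero).hasDerivAt
  have h0 : deriv g 0 = 0 := hm.deriv_eq_zero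
  have hslope := hasDerivAt_iff_tendsto_slope.1 hd
  have hneg : ∀ᶠ t in 𝓝[>] (0:ℝ), deriv g t < 0 := by
    have h1 : ∀ᶠ t in 𝓝[≠] (0:ℝ), slope (deriv g) 0 t < 0 :=
      hslope.eventually_lt_const h
    have h2 : ∀ᶠ t in 𝓝[>] (0:ℝ), slope (deriv g) 0 t < 0 :=
      h1.filter_mono (nhdsWithin_mono 0 (fun t ht => ne_of_gt ht))
    filter_upwards [h2, self_mem_nhdsWithin] with t ht ht0
    have hs : slope (deriv g) 0 t = t⁻¹ * deriv g t := by simp [slope, h0]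
    rw [hs] at ht
    by_contra h'
    push_neg at h'
    have : 0 ≤ t⁻¹ * deriv g t := mul_nonneg (inv_nonneg.2 (le_of_lt ht0)) h'
    linarith
  have hev : ∀ᶠ t in 𝓝 (0:ℝ), ContDiffAt ℝ 2 g t ∧ g 0 ≤ g t :=
    (hg.eventually (by norm_num)).and hm
  obtain ⟨δ, hδpos, hδ⟩ := Metric.eventually_nhds_iff.mp hev
  obtain ⟨δ', hδ'pos, hδ'⟩ := Metric.eventually_nhds_iff.mp (eventually_nhdsWithin_iff.mp hneg)
  set ε := min δ δ' / 2 with hεdef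
  have hε : 0 < ε := by positivity
  have hεδ : ε < δ := by
    have h1 := min_le_left δ δ'
    have h2 : 0 < min δ δ' := lt_min hδpos hδ'pos
    simp only [hεdef]; linarith
  have hεδ' : ε < δ' := by
    have h1 := min_le_right δ δ'
    have h2 : 0 < min δ δ' := lt_min hδpos hδ'pos
    simp only [hεdef]; linarith
  have hcont : ContinuousOn g (Set.Icc 0 ε) := by
    intro t ht
    have hdist : dist t 0 < δ := by
      rw [Real.dist_eq, sub_zero, abs_of_nonneg ht.1]
      exact lt_of_le_of_lt ht.2 hεδ
    exact ((hδ hdist).1.continuousAt.continuousWithinAt)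
  have hder : ∀ t ∈ interior (Set.Icc (0:ℝ) ε), deriv g t < 0 := by
    intro t ht
    rw [interior_Icc] at ht
    have hdist : dist t 0 < δ' := by
      rw [Real.dist_eq, sub_zero, abs_of_nonneg ht.1.le]
      exact lt_trans ht.2 hεδ'
    exact hδ' hdist ht.1
  have anti := strictAntiOn_of_deriv_neg (convex_Icc (0:ℝ) ε) hcont hder
  have hlt : g ε < g 0 := anti (Set.left_mem_Icc.2 hε.le) (Set.right_mem_Icc.2 hε.le) hε
  have hge : g 0 ≤ g ε := by
    have hdist : dist ε 0 < δ := by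
      rw [Real.dist_eq, sub_zero, abs_of_nonneg hε.le]; exact hεδ
    exact (hδ hdist).2
  linarith


lemma contDiffAt_line {N : ℕ} {f : EuclideanSpace ℝ (Fin N) → ℝ}
    {z v : EuclideanSpace ℝ (Fin N)} (hf : ContDiffAt ℝ 2 f z) :
    ContDiffAt ℝ 2 (fun t : ℝ => f (z + t • v)) 0 := by
  have hφ : ContDiffAt ℝ 2 (fun t : ℝ => z + t • v) 0 :=
    (contDiffAt_const.add (contDiffAt_id.smul contDiffAt_const))
  have hfz : ContDiffAt ℝ 2 f ((fun t : ℝ => z + t • v) 0) := by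
    simpa using hf
  exact hfz.comp 0 hφ

lemma lap_nonneg_of_isLocalMin {N : ℕ} {f : EuclideanSpace ℝ (Fin N) → ℝ}
    {z : EuclideanSpace ℝ (Fin N)} (hf : ContDiffAt ℝ 2 f z) (hm : IsLocalMin f z) :
    0 ≤ lap f z := by
  unfold lap
  apply Finset.sum_nonneg
  intro i _
  rw [bridge f z _ hf]
  apply d2_nonneg (contDiffAt_line hf)
  set v := EuclideanSpace.single i (1:ℝ)
  have hφt : Filter.Tendsto (fun t : ℝ => z + t • v) (𝓝 0) (𝓝 z) := by
    have hc : Continuous (fun t : ℝ => z + t • v) :=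
      continuous_const.add (continuous_id.smul continuous_const)
    have := hc.tendsto 0
    simpa using this
  have hev : ∀ᶠ t : ℝ in 𝓝 0, f z ≤ f (z + t • v) := hφt.eventually hm
  have : IsLocalMin (fun t : ℝ => f (z + t • v)) 0 := by
    unfold IsLocalMin IsMinFilter
    simpa using hev
  exact this


lemma engine {N : ℕ} (hN : 0 < N) (w : EuclideanSpace ℝ (Fin N) → ℝ) (R S : ℝ)
    (h0R : 0 < R) (hRS : R ≤ S)
    (hw : ∀ x : EuclideanSpace ℝ (Fin N), R ≤ ‖x‖ → ‖x‖ ≤ S → ContDiffAt ℝ 2 w x)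
    (hlap : ∀ x : EuclideanSpace ℝ (Fin N), R < ‖x‖ → ‖x‖ < S → lap w x < 0)
    (hb : ∀ x : EuclideanSpace ℝ (Fin N), ‖x‖ = R ∨ ‖x‖ = S → 0 ≤ w x) :
    ∀ x : EuclideanSpace ℝ (Fin N), R ≤ ‖x‖ → ‖x‖ ≤ S → 0 ≤ w x := by
  set K : Set (EuclideanSpace ℝ (Fin N)) := (fun y => ‖y‖) ⁻¹' Set.Icc R S with hK
  have hKclosed : IsClosed K := isClosed_Icc.preimage continuous_norm
  have hKbdd : IsBounded K := by
    apply (isBounded_closedBall (x := (0 : EuclideanSpace ℝ (Fin N))) (r := S)).subset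
    intro y hy
    simpa [Metric.mem_closedBall] using hy.2
  have hKcompact : IsCompact K := Metric.isCompact_of_isClosed_isBounded hKclosed hKbdd
  have hKne : K.Nonempty := by
    refine ⟨EuclideanSpace.single (⟨0, hN⟩ : Fin N) R, ?_⟩
    simp only [hK, Set.mem_preimage, EuclideanSpace.norm_single]
    rw [Real.norm_eq_abs, abs_of_nonneg h0R.le]
    exact ⟨le_rfl, hRS⟩
  have hcont : ContinuousOn w K := by
    intro y hy
    exact ((hw y hy.1 hy.2).continuousAt).continuousWithinAt
  obtain ⟨z, hzK, hzmin⟩ := hKcompact.exists_isMinOn hKne hcont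
  have hz0 : 0 ≤ w z := by
    rcases eq_or_lt_of_le (hzK.1 : R ≤ ‖z‖) with h1 | h1
    · exact hb z (Or.inl h1.symm)
    rcases eq_or_lt_of_le (hzK.2 : ‖z‖ ≤ S) with h2 | h2
    · exact hb z (Or.inr h2)
    · exfalso
      have hU : IsOpen ((fun y : EuclideanSpace ℝ (Fin N) => ‖y‖) ⁻¹' Set.Ioo R S) :=
        isOpen_Ioo.preimage continuous_norm
      have hKz : K ∈ 𝓝 z := by
        apply Filter.mem_of_superset (hU.mem_nhds ⟨h1, h2⟩)
        intro y hy
        exact ⟨hy.1.le, hy.2.le⟩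
      have hloc : IsLocalMin w z := hzmin.isLocalMin hKz
      have := lap_nonneg_of_isLocalMin (hw z hzK.1 hzK.2) hloc
      exact absurd (hlap z h1 h2) (not_lt.2 this)
  intro x hx1 hx2
  exact le_trans hz0 (hzmin ⟨hx1, hx2⟩)


-- pointwise identity
lemma norm_line_sq {N : ℕ} (x : EuclideanSpace ℝ (Fin N)) (i : Fin N) (t : ℝ) :
    ‖x + t • EuclideanSpace.single i (1:ℝ)‖ ^ 2 = ‖x‖^2 + 2*(x i)*t + t^2 := by
  rw [norm_add_sq_real]
  have h1 : (inner ℝ x (t • EuclideanSpace.single i (1:ℝ)) : ℝ) = t * x i := by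
    rw [real_inner_smul_right, EuclideanSpace.inner_single_right]
    simp
  have h2 : ‖t • EuclideanSpace.single i (1:ℝ)‖^2 = t^2 := by
    rw [norm_smul, EuclideanSpace.norm_single]
    simp [mul_pow, sq_abs]
  rw [h1, h2]
  ring

lemma rpow_line {N : ℕ} (x : EuclideanSpace ℝ (Fin N)) (i : Fin N) (δ : ℝ) (t : ℝ) :
    ‖x + t • EuclideanSpace.single i (1:ℝ)‖ ^ δ = (‖x‖^2 + 2*(x i)*t + t^2) ^ (δ/2) := by
  rw [← norm_line_sq x i t]
  set a := ‖x + t • EuclideanSpace.single i (1:ℝ)‖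
  have ha : 0 ≤ a := norm_nonneg _
  rw [← Real.rpow_natCast a 2, ← Real.rpow_mul ha]
  have h2 : ((2:ℕ):ℝ) * (δ/2) = δ := by push_cast; ring
  rw [h2]

lemma second_deriv_line_rad {N : ℕ} (x : EuclideanSpace ℝ (Fin N)) (hx : x ≠ 0) (i : Fin N)
    (c₀ c₁ δ₁ c₂ δ₂ : ℝ) :
    deriv (deriv (fun t : ℝ =>
        c₀ + c₁ * ‖x + t • EuclideanSpace.single i (1:ℝ)‖ ^ δ₁
           + c₂ * ‖x + t • EuclideanSpace.single i (1:ℝ)‖ ^ δ₂)) 0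
    = (c₁*δ₁*(δ₁-2)*(x i)^2*(‖x‖^2)^(δ₁/2-2) + c₁*δ₁*(‖x‖^2)^(δ₁/2-1))
      + (c₂*δ₂*(δ₂-2)*(x i)^2*(‖x‖^2)^(δ₂/2-2) + c₂*δ₂*(‖x‖^2)^(δ₂/2-1)) := by
  set q : ℝ := ‖x‖^2 with hqdef
  set b : ℝ := x i with hbdef
  have hq : 0 < q := by
    have : 0 < ‖x‖ := norm_pos_iff.2 hx
    positivity
  set P : ℝ → ℝ := fun t => q + 2*b*t + t^2 with hPdef
  have hP0 : P 0 = q := by simp [hPdef]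
  have hgfun : (fun t : ℝ =>
        c₀ + c₁ * ‖x + t • EuclideanSpace.single i (1:ℝ)‖ ^ δ₁
           + c₂ * ‖x + t • EuclideanSpace.single i (1:ℝ)‖ ^ δ₂)
      = fun t => c₀ + c₁ * (P t) ^ (δ₁/2) + c₂ * (P t) ^ (δ₂/2) := by
    funext t
    rw [rpow_line x i δ₁ t, rpow_line x i δ₂ t]
  rw [hgfun]
  have hPd : ∀ t : ℝ, HasDerivAt P (2*b + 2*t) t := by
    intro t
    have h1 : HasDerivAt (fun t : ℝ => q + 2*b*t + t^2) (2*b*1 + 2*t^1) t := by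
      exact (((hasDerivAt_id t).const_mul (2*b)).const_add q).add (hasDerivAt_pow 2 t)
    simpa using h1
  have hPpos : ∀ᶠ t : ℝ in 𝓝 0, 0 < P t := by
    have hc : ContinuousAt P 0 := (hPd 0).continuousAt
    have := hc.eventually_mem (s := Set.Ioi (0:ℝ)) (isOpen_Ioi.mem_nhds (by rw [hP0]; exact hq))
    simpa using this
  set G : ℝ → ℝ := fun t =>
      c₁ * ((2*b + 2*t) * (δ₁/2) * P t ^ (δ₁/2 - 1)) + c₂ * ((2*b + 2*t) * (δ₂/2) * P t ^ (δ₂/2 - 1))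
    with hGdef
  have E1 : ∀ᶠ t : ℝ in 𝓝 0, HasDerivAt (fun t => c₀ + c₁ * (P t) ^ (δ₁/2) + c₂ * (P t) ^ (δ₂/2)) (G t) t := by
    filter_upwards [hPpos] with t ht
    have h1 := ((hPd t).rpow_const (p := δ₁/2) (Or.inl (ne_of_gt ht))).const_mul c₁
    have h2 := ((hPd t).rpow_const (p := δ₂/2) (Or.inl (ne_of_gt ht))).const_mul c₂
    exact ((h1.const_add c₀).add h2)
  have hderG : deriv (fun t => c₀ + c₁ * (P t) ^ (δ₁/2) + c₂ * (P t) ^ (δ₂/2)) =ᶠ[𝓝 (0:ℝ)] G := by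
    filter_upwards [E1] with t ht
    exact ht.deriv
  rw [hderG.deriv_eq]
  -- now compute deriv G 0
  have hB : HasDerivAt (fun t : ℝ => 2*b + 2*t) 2 0 := by
    simpa using ((hasDerivAt_id (0:ℝ)).const_mul 2).const_add (2*b)
  have hA1 : HasDerivAt (fun t => P t ^ (δ₁/2 - 1)) ((2*b+2*0) * (δ₁/2-1) * P 0 ^ (δ₁/2-1-1)) 0 :=
    (hPd 0).rpow_const (Or.inl (by rw [hP0]; exact ne_of_gt hq))
  have hA2 : HasDerivAt (fun t => P t ^ (δ₂/2 - 1)) ((2*b+2*0) * (δ₂/2-1) * P 0 ^ (δ₂/2-1-1)) 0 :=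
    (hPd 0).rpow_const (Or.inl (by rw [hP0]; exact ne_of_gt hq))
  have hG1 : HasDerivAt G
      (c₁ * (2 * (δ₁/2) * P 0 ^ (δ₁/2-1) + ((2*b+2*0)*(δ₁/2)) * ((2*b+2*0)*(δ₁/2-1)*P 0^(δ₁/2-1-1)))
       + c₂ * (2 * (δ₂/2) * P 0 ^ (δ₂/2-1) + ((2*b+2*0)*(δ₂/2)) * ((2*b+2*0)*(δ₂/2-1)*P 0^(δ₂/2-1-1)))) 0 := by
    have t1 := ((hB.mul_const (δ₁/2)).mul hA1).const_mul c₁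
    have t2 := ((hB.mul_const (δ₂/2)).mul hA2).const_mul c₂
    exact t1.add t2
  rw [hG1.deriv]
  rw [hP0]
  have e1 : δ₁/2 - 1 - 1 = δ₁/2 - 2 := by ring
  have e2 : δ₂/2 - 1 - 1 = δ₂/2 - 2 := by ring
  rw [e1, e2]
  ring


lemma cd_rad {N : ℕ} (c₀ c₁ δ₁ c₂ δ₂ : ℝ) {x : EuclideanSpace ℝ (Fin N)} (hx : x ≠ 0) :
    ContDiffAt ℝ 2 (fun y => c₀ + c₁ * ‖y‖ ^ δ₁ + c₂ * ‖y‖ ^ δ₂) x := by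
  have hn : ContDiffAt ℝ 2 (fun y : EuclideanSpace ℝ (Fin N) => ‖y‖) x := contDiffAt_norm ℝ hx
  have h1 : ContDiffAt ℝ 2 (fun y : EuclideanSpace ℝ (Fin N) => ‖y‖ ^ δ₁) x :=
    hn.rpow_const_of_ne (norm_ne_zero_iff.2 hx)
  have h2 : ContDiffAt ℝ 2 (fun y : EuclideanSpace ℝ (Fin N) => ‖y‖ ^ δ₂) x :=
    hn.rpow_const_of_ne (norm_ne_zero_iff.2 hx)
  exact (contDiffAt_const.add (contDiffAt_const.mul h1)).add (contDiffAt_const.mul h2)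

lemma norm_sq_eq_sum {N : ℕ} (x : EuclideanSpace ℝ (Fin N)) : ‖x‖^2 = ∑ i, (x i)^2 := by
  rw [EuclideanSpace.norm_eq]
  rw [Real.sq_sqrt (by positivity)]
  congr 1
  funext i
  rw [Real.norm_eq_abs, sq_abs]

lemma lap_rad {N : ℕ} (c₀ c₁ δ₁ c₂ δ₂ : ℝ) {x : EuclideanSpace ℝ (Fin N)} (hx : x ≠ 0) :
    lap (fun y => c₀ + c₁ * ‖y‖ ^ δ₁ + c₂ * ‖y‖ ^ δ₂) x
    = c₁*δ₁*(δ₁+N-2) * ‖x‖ ^ (δ₁-2) + c₂*δ₂*(δ₂+N-2) * ‖x‖ ^ (δ₂-2) := by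
  have hq : (0:ℝ) < ‖x‖^2 := by
    have : 0 < ‖x‖ := norm_pos_iff.2 hx
    positivity
  unfold lap
  have hterm : ∀ i : Fin N,
      iteratedFDeriv ℝ 2 (fun y => c₀ + c₁ * ‖y‖ ^ δ₁ + c₂ * ‖y‖ ^ δ₂) x
        ![EuclideanSpace.single i 1, EuclideanSpace.single i 1]
      = (c₁*δ₁*(δ₁-2)*(x i)^2*(‖x‖^2)^(δ₁/2-2) + c₁*δ₁*(‖x‖^2)^(δ₁/2-1))
        + (c₂*δ₂*(δ₂-2)*(x i)^2*(‖x‖^2)^(δ₂/2-2) + c₂*δ₂*(‖x‖^2)^(δ₂/2-1)) := by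
    intro i
    rw [bridge _ _ _ (cd_rad c₀ c₁ δ₁ c₂ δ₂ hx)]
    exact second_deriv_line_rad x hx i c₀ c₁ δ₁ c₂ δ₂
  rw [Finset.sum_congr rfl (fun i _ => hterm i)]
  rw [Finset.sum_add_distrib]
  have key : ∀ δ c : ℝ,
      (∑ i : Fin N, (c*δ*(δ-2)*(x i)^2*(‖x‖^2)^(δ/2-2) + c*δ*(‖x‖^2)^(δ/2-1)))
      = c*δ*(δ+N-2) * ‖x‖ ^ (δ-2) := by
    intro δ c
    set q : ℝ := ‖x‖^2 with hqd
    have hsum : ∑ i : Fin N, (x i)^2 = q := (norm_sq_eq_sum x).symm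
    have hq1 : q ^ (δ/2-2) * q = q ^ (δ/2-1) := by
      have h' : q ^ (δ/2-1) = q ^ (δ/2-2) * q ^ (1:ℝ) := by
        rw [← Real.rpow_add hq]
        congr 1
        ring
      rw [Real.rpow_one] at h'
      exact h'.symm
    have hq2 : q ^ (δ/2-1) = ‖x‖ ^ (δ-2) := by
      rw [hqd, ← Real.rpow_natCast ‖x‖ 2, ← Real.rpow_mul (norm_nonneg x)]
      congr 1
      push_cast
      ring
    calc (∑ i : Fin N, (c*δ*(δ-2)*(x i)^2*q^(δ/2-2) + c*δ*q^(δ/2-1)))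
        = ∑ i : Fin N, ((c*δ*(δ-2)*q^(δ/2-2)) * (x i)^2 + c*δ*q^(δ/2-1)) :=
          Finset.sum_congr rfl (fun i _ => by ring)
      _ = (c*δ*(δ-2)*q^(δ/2-2)) * (∑ i : Fin N, (x i)^2)
            + (N:ℝ) * (c*δ*q^(δ/2-1)) := by
          rw [Finset.sum_add_distrib, ← Finset.mul_sum, Finset.sum_const,
            Finset.card_univ, Fintype.card_fin, nsmul_eq_mul]
      _ = (c*δ*(δ-2)) * (q^(δ/2-2) * q) + (N:ℝ) * (c*δ*q^(δ/2-1)) := by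
          rw [hsum]; ring
      _ = c*δ*(δ+N-2) * ‖x‖ ^ (δ-2) := by
          rw [hq1, hq2]; ring
  rw [key δ₁ c₁, key δ₂ c₂]


lemma lap_add {N : ℕ} {u g : EuclideanSpace ℝ (Fin N) → ℝ} {x : EuclideanSpace ℝ (Fin N)}
    (hu : ContDiffAt ℝ 2 u x) (hg : ContDiffAt ℝ 2 g x) :
    lap (fun y => u y + g y) x = lap u x + lap g x := by
  unfold lap
  rw [← Finset.sum_add_distrib]
  apply Finset.sum_congr rfl
  intro i _
  rw [iteratedFDeriv_two_apply, iteratedFDeriv_two_apply, iteratedFDeriv_two_apply]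
  have hev : (fderiv ℝ (fun z => u z + g z)) =ᶠ[𝓝 x] (fun y => fderiv ℝ u y + fderiv ℝ g y) := by
    filter_upwards [hu.eventually (by norm_num), hg.eventually (by norm_num)] with y hy1 hy2
    exact fderiv_fun_add (hy1.differentiableAt (by norm_num)) (hy2.differentiableAt (by norm_num))
  have hdu : DifferentiableAt ℝ (fderiv ℝ u) x :=
    (hu.fderiv_right (m := 1) (by norm_num)).differentiableAt one_ne_zero
  have hdg : DifferentiableAt ℝ (fderiv ℝ g) x :=
    (hg.fderiv_right (m := 1) (by norm_num)).differentiableAt one_ne_zero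
  rw [hev.fderiv_eq, fderiv_fun_add hdu hdg]
  simp
section LemAB
variable {N : ℕ}

lemma lemA (hN : 3 ≤ N) (u : EuclideanSpace ℝ (Fin N) → ℝ)
    (hu : ∀ x : EuclideanSpace ℝ (Fin N), Real.exp 1 < ‖x‖ → ContDiffAt ℝ 2 u x)
    (hupos : ∀ x : EuclideanSpace ℝ (Fin N), Real.exp 1 < ‖x‖ → 0 < u x)
    (δ E R : ℝ) (hδ0 : δ < 0) (hE : 0 ≤ E) (hR : Real.exp 1 < R)
    (hlap : ∀ x : EuclideanSpace ℝ (Fin N), R ≤ ‖x‖ →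
      lap u x < E * (δ*(δ+N-2)) * ‖x‖^(δ-2))
    (hbd : ∀ x : EuclideanSpace ℝ (Fin N), ‖x‖ = R → E * R^δ ≤ u x) :
    ∀ x : EuclideanSpace ℝ (Fin N), R ≤ ‖x‖ → E * ‖x‖^δ ≤ u x := by
  intro x0 hx0
  have he : (0:ℝ) < Real.exp 1 := Real.exp_pos 1
  have hR0 : 0 < R := lt_trans he hR
  have hN0 : 0 < N := by omega
  have main : ∀ S : ℝ, ‖x0‖ ≤ S → E * ‖x0‖^δ - E * S^δ ≤ u x0 := by
    intro S hS
    have hRS : R ≤ S := le_trans hx0 hS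
    set w : EuclideanSpace ℝ (Fin N) → ℝ :=
      fun y => u y + ((E * S^δ) + (-E) * ‖y‖^δ + 0 * ‖y‖^δ) with hw
    have hwall : ∀ x : EuclideanSpace ℝ (Fin N), R ≤ ‖x‖ → ‖x‖ ≤ S → 0 ≤ w x := by
      apply engine hN0 w R S hR0 hRS
      · intro x hx1 _
        have hxne : x ≠ 0 := by
          intro h; rw [h] at hx1; simp at hx1; linarith
        exact (hu x (lt_of_lt_of_le hR hx1)).add (cd_rad (E*S^δ) (-E) δ 0 δ hxne)
      · intro x hx1 hx2
        have hxne : x ≠ 0 := by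
          intro h; rw [h] at hx1; simp at hx1; linarith
        have hlapw : lap w x = lap u x +
            ((-E)*δ*(δ+N-2) * ‖x‖^(δ-2) + 0*δ*(δ+N-2) * ‖x‖^(δ-2)) := by
          rw [hw]
          rw [lap_add (hu x (lt_of_lt_of_le hR hx1.le)) (cd_rad (E*S^δ) (-E) δ 0 δ hxne)]
          rw [lap_rad (E*S^δ) (-E) δ 0 δ hxne]
        rw [hlapw]
        have := hlap x hx1.le
        nlinarith [this]
      · intro x hx
        rcases hx with h | h
        · have h1 : E * R^δ ≤ u x := hbd x h
          have h2 : 0 ≤ E * S^δ := mul_nonneg hE (Real.rpow_nonneg (le_trans hR0.le hRS) δ)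
          simp only [hw, h]
          nlinarith
        · have h1 : 0 < u x := hupos x (by rw [h]; exact lt_of_lt_of_le hR hRS)
          simp only [hw, h]
          nlinarith
    have := hwall x0 hx0 hS
    simp only [hw] at this
    nlinarith
  have hlim : Filter.Tendsto (fun S : ℝ => E * ‖x0‖^δ - E * S^δ) atTop
      (𝓝 (E * ‖x0‖^δ - E * 0)) := by
    have h1 : Filter.Tendsto (fun S : ℝ => S ^ δ) atTop (𝓝 0) := by
      have := tendsto_rpow_neg_atTop (y := -δ) (by linarith)
      simpa using this
    exact tendsto_const_nhds.sub (h1.const_mul E)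
  have := le_of_tendsto hlim (Filter.eventually_atTop.2 ⟨‖x0‖, main⟩)
  simpa using this

lemma lemB (hN : 3 ≤ N) (u : EuclideanSpace ℝ (Fin N) → ℝ)
    (hu : ∀ x : EuclideanSpace ℝ (Fin N), Real.exp 1 < ‖x‖ → ContDiffAt ℝ 2 u x)
    (hupos : ∀ x : EuclideanSpace ℝ (Fin N), Real.exp 1 < ‖x‖ → 0 < u x)
    (M : ℝ) (hbdM : ∀ x : EuclideanSpace ℝ (Fin N), Real.exp 1 < ‖x‖ → u x ≤ M)
    (η A R : ℝ) (hη : 0 < η) (hA : 0 < A) (hR : Real.exp 1 < R)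
    (hlap : ∀ x : EuclideanSpace ℝ (Fin N), R ≤ ‖x‖ →
      lap u x < -(A*η*(η+N-2)) * ‖x‖^(η-2)) : False := by
  have he : (0:ℝ) < Real.exp 1 := Real.exp_pos 1
  have hR0 : 0 < R := lt_trans he hR
  have hN0 : 0 < N := by omega
  have hN2 : (0:ℝ) < (N:ℝ) - 2 := by
    have : (3:ℝ) ≤ (N:ℝ) := by exact_mod_cast hN
    linarith
  set ρ : ℝ := R + 1 with hρdef
  have hρ0 : 0 < ρ := by linarith
  set x₁ : EuclideanSpace ℝ (Fin N) := EuclideanSpace.single (⟨0, hN0⟩ : Fin N) ρ with hx₁def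
  have hx₁norm : ‖x₁‖ = ρ := by
    rw [hx₁def, EuclideanSpace.norm_single, Real.norm_eq_abs, abs_of_nonneg hρ0.le]
  have hfrac : R^((N:ℝ)-2) * ρ^(2-(N:ℝ)) < 1 := by
    have h1 : R^((N:ℝ)-2) < ρ^((N:ℝ)-2) :=
      Real.rpow_lt_rpow hR0.le (by linarith) hN2
    have h2 : ρ^(2-(N:ℝ)) = (ρ^((N:ℝ)-2))⁻¹ := by
      rw [← Real.rpow_neg hρ0.le]
      congr 1; ring
    rw [h2]
    have h3 : 0 < ρ^((N:ℝ)-2) := Real.rpow_pos_of_pos hρ0 _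
    rw [mul_inv_lt_iff₀ h3]
    simpa using h1
  set κ : ℝ := A * (1 - R^((N:ℝ)-2) * ρ^(2-(N:ℝ))) with hκdef
  have hκ : 0 < κ := mul_pos hA (by linarith)
  have main : ∀ S : ℝ, ρ ≤ S → κ * S^η - A*ρ^η ≤ M := by
    intro S hS
    have hRS : R ≤ S := by linarith
    set c₂ : ℝ := A*S^η*R^((N:ℝ)-2) with hc₂def
    have hSpos : 0 < S := by linarith
    have hc₂pos : 0 < c₂ :=
      mul_pos (mul_pos hA (Real.rpow_pos_of_pos hSpos η)) (Real.rpow_pos_of_pos hR0 _)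
    set w : EuclideanSpace ℝ (Fin N) → ℝ :=
      fun y => u y + ((-(A * S^η)) + A * ‖y‖^η + c₂ * ‖y‖^(2-(N:ℝ))) with hw
    have hwall : ∀ x : EuclideanSpace ℝ (Fin N), R ≤ ‖x‖ → ‖x‖ ≤ S → 0 ≤ w x := by
      apply engine hN0 w R S hR0 hRS
      · intro x hx1 _
        have hxne : x ≠ 0 := by
          intro h; rw [h] at hx1; simp at hx1; linarith
        exact (hu x (lt_of_lt_of_le hR hx1)).add (cd_rad (-(A * S^η)) A η c₂ (2-(N:ℝ)) hxne)
      · intro x hx1 hx2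
        have hxne : x ≠ 0 := by
          intro h; rw [h] at hx1; simp at hx1; linarith
        have hlapw : lap w x = lap u x +
            (A*η*(η+N-2) * ‖x‖^(η-2) + c₂*(2-(N:ℝ))*((2-(N:ℝ))+N-2) * ‖x‖^((2-(N:ℝ))-2)) := by
          rw [hw]
          rw [lap_add (hu x (lt_of_lt_of_le hR hx1.le)) (cd_rad (-(A * S^η)) A η c₂ (2-(N:ℝ)) hxne)]
          rw [lap_rad (-(A * S^η)) A η c₂ (2-(N:ℝ)) hxne]
        have hzero : c₂*(2-(N:ℝ))*((2-(N:ℝ))+N-2) * ‖x‖^((2-(N:ℝ))-2) = 0 := by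
          have : (2-(N:ℝ))+(N:ℝ)-2 = 0 := by ring
          rw [this]
          ring
        rw [hlapw, hzero]
        have := hlap x hx1.le
        linarith
      · intro x hx
        rcases hx with h | h
        · -- inner boundary: w x = u x + A R^η > 0  (uses R^(N-2) * R^(2-N) = 1)
          have h1 : 0 < u x := hupos x (by rw [h]; exact hR)
          have hRR : R^((N:ℝ)-2) * R^(2-(N:ℝ)) = 1 := by
            rw [← Real.rpow_add hR0]
            norm_num
          have hval : w x = u x + A * R^η := by
            simp only [hw, h, hc₂def]
            have : A*S^η*R^((N:ℝ)-2) * R^(2-(N:ℝ)) = A*S^η := by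
              rw [mul_assoc, hRR, mul_one]
            rw [this]
            ring
          rw [hval]
          have : 0 < A * R^η := mul_pos hA (Real.rpow_pos_of_pos hR0 η)
          linarith
        · -- outer boundary
          have h1 : 0 < u x := hupos x (by rw [h]; linarith)
          have h2 : 0 < c₂ * S^(2-(N:ℝ)) := mul_pos hc₂pos (Real.rpow_pos_of_pos hSpos _)
          simp only [hw, h]
          nlinarith
    have hx₁1 : R ≤ ‖x₁‖ := by rw [hx₁norm]; linarith
    have hx₁2 : ‖x₁‖ ≤ S := by rw [hx₁norm]; exact hS
    have h0 := hwall x₁ hx₁1 hx₁2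
    have hux₁ : u x₁ ≤ M := hbdM x₁ (by rw [hx₁norm]; linarith)
    simp only [hw, hx₁norm, hc₂def, hκdef] at h0 ⊢
    nlinarith
  -- κ S^η → ∞
  have htend : Filter.Tendsto (fun S : ℝ => κ * S^η - A*ρ^η) atTop atTop := by
    apply Filter.tendsto_atTop_add_const_right
    exact (tendsto_rpow_atTop hη).const_mul_atTop hκ
  obtain ⟨S, hS1, hS2⟩ := ((htend.eventually_gt_atTop M).and (Filter.eventually_ge_atTop ρ)).exists
  exact absurd (main S hS2) (not_le.2 hS1)

end LemAB
set_option maxHeartbeats 1000000 in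
theorem stmt12 (N : ℕ) (hN : 3 ≤ N) (β τ p : ℝ) (hβ : -2 < β) (hp : p < 1) :
    ¬ ∃ u : EuclideanSpace ℝ (Fin N) → ℝ, ∃ M : ℝ,
        ContDiffOn ℝ 2 u {x | Real.exp 1 < ‖x‖} ∧
        (∀ x : EuclideanSpace ℝ (Fin N), Real.exp 1 < ‖x‖ → 0 < u x) ∧
        (∀ x : EuclideanSpace ℝ (Fin N), Real.exp 1 < ‖x‖ → u x ≤ M) ∧
        (∀ x : EuclideanSpace ℝ (Fin N), Real.exp 1 < ‖x‖ →
          ‖x‖ ^ β * (Real.log ‖x‖) ^ τ * u x ^ p ≤ -lap u x) ∧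
        (∀ x : EuclideanSpace ℝ (Fin N), ‖x‖ = Real.exp 1 → 0 ≤ u x) := by
  rintro ⟨u, M, hC2, hupos, hbdM, hsuper, -⟩
  have hN0 : 0 < N := by omega
  have hNr : (3:ℝ) ≤ (N:ℝ) := by exact_mod_cast hN
  have he2 : (2:ℝ) ≤ Real.exp 1 := by
    have := Real.add_one_le_exp 1
    linarith
  have he0 : (0:ℝ) < Real.exp 1 := Real.exp_pos 1
  have hΩ : IsOpen {x : EuclideanSpace ℝ (Fin N) | Real.exp 1 < ‖x‖} :=
    isOpen_lt continuous_const continuous_norm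
  have hu : ∀ x : EuclideanSpace ℝ (Fin N), Real.exp 1 < ‖x‖ → ContDiffAt ℝ 2 u x :=
    fun x hx => hC2.contDiffAt (hΩ.mem_nhds hx)
  -- strict superharmonicity
  have hlap0 : ∀ x : EuclideanSpace ℝ (Fin N), Real.exp 1 < ‖x‖ → lap u x < 0 := by
    intro x hx
    have hx0 : (0:ℝ) < ‖x‖ := lt_trans he0 hx
    have hlog : (0:ℝ) < Real.log ‖x‖ := by
      apply Real.log_pos
      linarith
    have h1 : 0 < ‖x‖ ^ β * (Real.log ‖x‖) ^ τ * u x ^ p :=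
      mul_pos (mul_pos (Real.rpow_pos_of_pos hx0 β) (Real.rpow_pos_of_pos hlog τ))
        (Real.rpow_pos_of_pos (hupos x hx) p)
    have := hsuper x hx
    linarith
  -- M is positive
  have hM : 0 < M := by
    set x₂ : EuclideanSpace ℝ (Fin N) := EuclideanSpace.single (⟨0, hN0⟩ : Fin N) (Real.exp 1 + 1)
    have hx₂ : Real.exp 1 < ‖x₂‖ := by
      rw [EuclideanSpace.norm_single, Real.norm_eq_abs, abs_of_nonneg (by linarith)]
      linarith
    exact lt_of_lt_of_le (hupos x₂ hx₂) (hbdM x₂ hx₂)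
  set c : ℝ := M ^ (p - 1) with hcdef
  have hc : 0 < c := Real.rpow_pos_of_pos hM _
  set σ : ℝ := (β + 2) / 2 with hσdef
  have hσ : 0 < σ := by simp only [hσdef]; linarith
  -- potential lower bound
  have hpb : ∀ᶠ r : ℝ in atTop, (1:ℝ) ≤ r ^ σ * (Real.log r) ^ τ := by
    rcases le_or_gt 0 τ with hτ | hτ
    · filter_upwards [Filter.eventually_ge_atTop (Real.exp 1)] with r hr
      have hr1 : (1:ℝ) ≤ r := by linarith
      have hlog1 : (1:ℝ) ≤ Real.log r := by
        rw [show (1:ℝ) = Real.log (Real.exp 1) by simp]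
        exact Real.log_le_log (by positivity) hr
      have h1 : (1:ℝ) ≤ r ^ σ := Real.one_le_rpow hr1 hσ.le
      have h2 : (1:ℝ) ≤ (Real.log r) ^ τ := Real.one_le_rpow hlog1 hτ
      nlinarith
    · have hlo := isLittleO_log_rpow_rpow_atTop (s := σ) (-τ) hσ
      have hbound := hlo.bound one_pos
      filter_upwards [hbound, Filter.eventually_ge_atTop (Real.exp 1)] with r h1 hr
      have hr0 : (0:ℝ) < r := by linarith
      have hlog1 : (1:ℝ) ≤ Real.log r := by
        rw [show (1:ℝ) = Real.log (Real.exp 1) by simp]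
        exact Real.log_le_log (by positivity) hr
      have hlogpos : (0:ℝ) < Real.log r := by linarith
      rw [Real.norm_eq_abs, Real.norm_eq_abs, one_mul,
        abs_of_nonneg (Real.rpow_nonneg hlogpos.le _),
        abs_of_nonneg (Real.rpow_nonneg hr0.le _)] at h1
      -- h1 : (log r) ^ (-τ) ≤ r ^ σ
      have h2 : (Real.log r) ^ τ = ((Real.log r) ^ (-τ))⁻¹ := by
        rw [← Real.rpow_neg hlogpos.le]
        norm_num
      have h3 : 0 < (Real.log r) ^ (-τ) := Real.rpow_pos_of_pos hlogpos _
      rw [h2, ← div_eq_mul_inv, one_le_div h3]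
      exact h1
  obtain ⟨r₀, hr₀⟩ := Filter.eventually_atTop.1 hpb
  set R₀ : ℝ := max r₀ (Real.exp 1 + 1) with hR₀def
  have hR₀e : Real.exp 1 < R₀ := lt_of_lt_of_le (by linarith) (le_max_right _ _)
  have hR₀0 : 0 < R₀ := lt_trans he0 hR₀e
  -- key linear differential inequality
  have hkey : ∀ x : EuclideanSpace ℝ (Fin N), R₀ ≤ ‖x‖ →
      lap u x ≤ -(c * ‖x‖ ^ (σ - 2) * u x) := by
    intro x hx
    have hxe : Real.exp 1 < ‖x‖ := lt_of_lt_of_le hR₀e hx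
    have hx0 : (0:ℝ) < ‖x‖ := lt_trans he0 hxe
    have hlog : (0:ℝ) < Real.log ‖x‖ := Real.log_pos (by linarith)
    have hup : 0 < u x := hupos x hxe
    -- u x ^ p ≥ c * u x
    have h1 : c * u x ≤ u x ^ p := by
      have ha : u x ^ p = u x ^ (p - 1) * u x := by
        rw [← Real.rpow_add_one (ne_of_gt hup)]
        congr 1; ring
      rw [ha, hcdef]
      have hb : M ^ (p-1) ≤ u x ^ (p-1) :=
        Real.rpow_le_rpow_of_nonpos hup (hbdM x hxe) (by linarith)
      exact mul_le_mul_of_nonneg_right hb hup.le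
    -- potential bound
    have h2 : ‖x‖ ^ (σ - 2) ≤ ‖x‖ ^ β * (Real.log ‖x‖) ^ τ := by
      have hr : (1:ℝ) ≤ ‖x‖ ^ σ * (Real.log ‖x‖) ^ τ :=
        hr₀ ‖x‖ (le_trans (le_max_left _ _) hx)
      have hβσ : ‖x‖ ^ β = ‖x‖ ^ (σ - 2) * ‖x‖ ^ σ := by
        rw [← Real.rpow_add hx0]
        congr 1
        simp only [hσdef]; ring
      rw [hβσ, mul_assoc]
      nlinarith [Real.rpow_pos_of_pos hx0 (σ - 2)]
    have h3 := hsuper x hxe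
    have h4 : c * ‖x‖ ^ (σ - 2) * u x ≤ ‖x‖ ^ β * (Real.log ‖x‖) ^ τ * u x ^ p := by
      have hcu : 0 ≤ c * u x := (mul_pos hc hup).le
      calc c * ‖x‖ ^ (σ - 2) * u x = ‖x‖ ^ (σ - 2) * (c * u x) := by ring
        _ ≤ (‖x‖ ^ β * (Real.log ‖x‖) ^ τ) * (u x ^ p) := by
            apply mul_le_mul h2 h1 hcu
            positivity
        _ = ‖x‖ ^ β * (Real.log ‖x‖) ^ τ * u x ^ p := by ring
    linarith
  -- minimum of u on the sphere of radius R₀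
  have hsphmem : ∀ y : EuclideanSpace ℝ (Fin N), y ∈ Metric.sphere (0:EuclideanSpace ℝ (Fin N)) R₀ → ‖y‖ = R₀ := by
    intro y hy; rwa [mem_sphere_zero_iff_norm] at hy
  have hsph : (Metric.sphere (0:EuclideanSpace ℝ (Fin N)) R₀).Nonempty := by
    refine ⟨EuclideanSpace.single (⟨0, hN0⟩ : Fin N) R₀, ?_⟩
    rw [mem_sphere_zero_iff_norm, EuclideanSpace.norm_single, Real.norm_eq_abs,
      abs_of_nonneg hR₀0.le]
  obtain ⟨z₀, hz₀mem, hz₀min⟩ :=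
    (isCompact_sphere (0:EuclideanSpace ℝ (Fin N)) R₀).exists_isMinOn hsph
      (fun y hy => ((hu y (by rw [hsphmem y hy]; exact hR₀e)).continuousAt).continuousWithinAt)
  set m : ℝ := u z₀ with hmdef
  have hm0 : 0 < m := hupos z₀ (by rw [hsphmem z₀ hz₀mem]; exact hR₀e)
  -- combined inequality
  have hcomb : ∀ (C γ R : ℝ), 0 < C → R₀ ≤ R →
      (∀ x : EuclideanSpace ℝ (Fin N), R ≤ ‖x‖ → C * ‖x‖^(-γ) ≤ u x) →
      ∀ x : EuclideanSpace ℝ (Fin N), R ≤ ‖x‖ →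
        lap u x ≤ -(c * C * ‖x‖ ^ (σ - 2 - γ)) := by
    intro C γ R hC hRR₀ hb x hx
    have hx₀ : R₀ ≤ ‖x‖ := le_trans hRR₀ hx
    have hxpos : 0 < ‖x‖ := lt_of_lt_of_le hR₀0 hx₀
    have h1 := hkey x hx₀
    have h2 := hb x hx
    have hpos : (0:ℝ) < c * ‖x‖^(σ-2) := by positivity
    have h3 : c * ‖x‖^(σ-2) * (C * ‖x‖^(-γ)) ≤ c * ‖x‖^(σ-2) * u x :=
      mul_le_mul_of_nonneg_left h2 hpos.le
    have h4 : c * ‖x‖^(σ-2) * (C*‖x‖^(-γ)) = c * C * ‖x‖^(σ-2-γ) := by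
      rw [show σ-2-γ = (σ-2) + (-γ) by ring, Real.rpow_add hxpos]
      ring
    rw [h4] at h3
    linarith
  set s : ℝ := σ/2 with hsdef
  have hs : 0 < s := by positivity
  have hσs : σ = 2*s := by rw [hsdef]; ring
  -- the bootstrap
  have boot : ∀ k : ℕ, 0 < (N:ℝ)-2-k*s → ∃ C R : ℝ, 0 < C ∧ R₀ ≤ R ∧
      ∀ x : EuclideanSpace ℝ (Fin N), R ≤ ‖x‖ → C * ‖x‖^(-((N:ℝ)-2-k*s)) ≤ u x := by
    intro k
    induction k with
    | zero =>
      intro _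
      refine ⟨m * R₀^((N:ℝ)-2), R₀, by positivity, le_rfl, ?_⟩
      have hexp : -((N:ℝ)-2-(0:ℕ)*s) = -((N:ℝ)-2) := by push_cast; ring
      rw [hexp]
      apply lemA hN u hu hupos (-((N:ℝ)-2)) (m * R₀^((N:ℝ)-2)) R₀ (by linarith)
        (by positivity) hR₀e
      · intro x hx
        have hz : -((N:ℝ)-2) + (N:ℝ) - 2 = 0 := by ring
        have h0 : m * R₀^((N:ℝ)-2) * (-((N:ℝ)-2) * (-((N:ℝ)-2) + (N:ℝ) - 2)) * ‖x‖^(-((N:ℝ)-2)-2) = 0 := by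
          rw [hz]; ring
        rw [h0]
        exact hlap0 x (lt_of_lt_of_le hR₀e hx)
      · intro x hx
        have h1 : m * R₀^((N:ℝ)-2) * R₀^(-((N:ℝ)-2)) = m := by
          rw [mul_assoc, ← Real.rpow_add hR₀0]
          simp
        rw [h1]
        exact hz₀min (mem_sphere_zero_iff_norm.2 hx)
    | succ k ih =>
      intro hg
      have hcast : ((k+1:ℕ):ℝ) = (k:ℝ) + 1 := by push_cast; ring
      rw [hcast] at hg ⊢
      have hgk : 0 < (N:ℝ)-2-k*s := by nlinarith
      obtain ⟨C, R, hC, hRR₀, hb⟩ := ih hgk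
      have hRpos : 0 < R := lt_of_lt_of_le hR₀0 hRR₀
      set γ : ℝ := (N:ℝ)-2-k*s with hγdef
      set δ' : ℝ := s - γ with hδ'def
      have hδ'neg : δ' < 0 := by simp only [hδ'def, hγdef]; nlinarith
      have hδ'N : δ' + (N:ℝ) - 2 = ((k:ℝ)+1)*s := by
        simp only [hδ'def, hγdef]; ring
      have hq : δ' * (δ' + (N:ℝ) - 2) < 0 := by
        rw [hδ'N]
        apply mul_neg_of_neg_of_pos hδ'neg
        positivity
      set E' : ℝ := min (C * R^(-s)) ((c*C/2) * R^s / (-(δ' * (δ' + (N:ℝ) - 2)))) with hE'def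
      have hE'pos : 0 < E' := by
        apply lt_min
        · positivity
        · apply div_pos (by positivity)
          linarith
      refine ⟨E', R, hE'pos, hRR₀, ?_⟩
      have hexp : -((N:ℝ)-2-((k:ℝ)+1)*s) = δ' := by simp only [hδ'def, hγdef]; ring
      rw [hexp]
      apply lemA hN u hu hupos δ' E' R hδ'neg hE'pos.le (lt_of_lt_of_le hR₀e hRR₀)
      · -- laplacian comparison
        intro x hx
        have hxpos : 0 < ‖x‖ := lt_of_lt_of_le hRpos hx
        have hcb := hcomb C γ R hC hRR₀ hb x hx
        set a : ℝ := ‖x‖^(σ-2-γ) with hadef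
        have ha : 0 < a := Real.rpow_pos_of_pos hxpos _
        have h1 : E' * (-(δ' * (δ' + (N:ℝ) - 2))) ≤ (c*C/2) * R^s := by
          have := min_le_right (C * R^(-s)) ((c*C/2) * R^s / (-(δ' * (δ' + (N:ℝ) - 2))))
          rw [← hE'def] at this
          rw [← le_div_iff₀ (by linarith : (0:ℝ) < -(δ' * (δ' + (N:ℝ) - 2)))]
          exact this
        have h2 : ‖x‖^(δ'-2) = a * ‖x‖^(-s) := by
          rw [hadef, ← Real.rpow_add hxpos]
          congr 1
          rw [hσs]; simp only [hδ'def]; ring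
        have h3 : ‖x‖^(-s) ≤ R^(-s) :=
          Real.rpow_le_rpow_of_nonpos hRpos hx (by linarith)
        have hRs : R^s * R^(-s) = 1 := by
          rw [← Real.rpow_add hRpos]; simp
        have h4 : E' * (-(δ' * (δ' + (N:ℝ) - 2))) * ‖x‖^(δ'-2) ≤ (c*C/2) * a := by
          rw [h2]
          have hb1 : E' * (-(δ' * (δ' + (N:ℝ) - 2))) * ‖x‖^(-s) ≤ (c*C/2) * R^s * R^(-s) := by
            apply mul_le_mul h1 h3 (Real.rpow_nonneg hxpos.le _)
            positivity
          calc E' * (-(δ' * (δ' + (N:ℝ) - 2))) * (a * ‖x‖^(-s))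
              = (E' * (-(δ' * (δ' + (N:ℝ) - 2))) * ‖x‖^(-s)) * a := by ring
            _ ≤ ((c*C/2) * R^s * R^(-s)) * a := mul_le_mul_of_nonneg_right hb1 ha.le
            _ = (c*C/2) * ((R^s * R^(-s)) * a) := by ring
            _ = (c*C/2) * a := by rw [hRs, one_mul]
        have e1 : E' * (δ' * (δ' + (N:ℝ) - 2)) * ‖x‖^(δ'-2)
            = -(E' * (-(δ' * (δ' + (N:ℝ) - 2))) * ‖x‖^(δ'-2)) := by ring
        have hpos2 : 0 < (c*C/2) * a := by positivity
        rw [e1]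
        clear_value a E' δ' γ s σ c
        linarith
      · -- boundary
        intro x hx
        have hbx : C * R^(-γ) ≤ u x := by
          have h0 := hb x (le_of_eq hx.symm)
          rwa [hx] at h0
        have h1 : E' ≤ C * R^(-s) := min_le_left _ _
        have h2 : E' * R^δ' ≤ C * R^(-s) * R^δ' :=
          mul_le_mul_of_nonneg_right h1 (Real.rpow_nonneg hRpos.le _)
        have h3 : C * R^(-s) * R^δ' = C * R^(-γ) := by
          rw [mul_assoc, ← Real.rpow_add hRpos]
          congr 2
          simp only [hδ'def]; ring
        rw [h3] at h2
        exact le_trans h2 hbx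
  -- choose terminal k
  have hex : ∃ k : ℕ, (N:ℝ)-2-k*s ≤ s := by
    obtain ⟨k, hk⟩ := exists_nat_ge (((N:ℝ)-2)/s)
    refine ⟨k, ?_⟩
    rw [div_le_iff₀ hs] at hk
    nlinarith
  set k₀ := Nat.find hex with hk₀def
  have hk₀ : (N:ℝ)-2-k₀*s ≤ s := Nat.find_spec hex
  have hγpos : 0 < (N:ℝ)-2-k₀*s := by
    rcases Nat.eq_zero_or_pos k₀ with h | h
    · rw [h]; push_cast; linarith
    · obtain ⟨j, hj⟩ := Nat.exists_eq_succ_of_ne_zero (Nat.pos_iff_ne_zero.mp h)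
      have hjlt : j < k₀ := by omega
      have hjspec := Nat.find_min hex (by rw [hk₀def] at hjlt; exact hjlt)
      push_neg at hjspec
      have : (N:ℝ)-2-j*s > s := hjspec
      have hcast : (k₀:ℝ) = (j:ℝ) + 1 := by rw [hj]; push_cast; ring
      rw [hcast]
      nlinarith
  obtain ⟨C, R, hC, hRR₀, hb⟩ := boot k₀ hγpos
  set γ : ℝ := (N:ℝ)-2-k₀*s with hγdef
  set η : ℝ := σ - γ with hηdef
  have hη : 0 < η := by
    simp only [hηdef]
    rw [hσs]
    linarith
  have hηN : 0 < η * (η + (N:ℝ) - 2) := by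
    apply mul_pos hη
    nlinarith
  set A : ℝ := (c*C/2) / (η * (η + (N:ℝ) - 2)) with hAdef
  have hA : 0 < A := div_pos (by positivity) hηN
  apply lemB hN u hu hupos M hbdM η A R hη hA (lt_of_lt_of_le hR₀e hRR₀)
  intro x hx
  have hxpos : 0 < ‖x‖ := lt_of_lt_of_le (lt_of_lt_of_le hR₀0 hRR₀) hx
  have hcb := hcomb C γ R hC hRR₀ hb x hx
  have hAη : A * η * (η + (N:ℝ) - 2) = c*C/2 := by
    rw [hAdef]
    rw [mul_assoc, div_mul_cancel₀ _ hηN.ne']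
  have hexp : σ - 2 - γ = η - 2 := by simp only [hηdef]; ring
  rw [hexp] at hcb
  have ha : 0 < ‖x‖^(η-2) := Real.rpow_pos_of_pos hxpos _
  have h5 : -(A*η*(η+(N:ℝ)-2)) * ‖x‖^(η-2) = -(c*C/2) * ‖x‖^(η-2) := by rw [hAη]
  rw [h5]
  have hpos3 : 0 < c*C/2 * ‖x‖^(η-2) := by positivity
  clear_value η γ s σ c A
  linarith
end

section
/- Let N ≥ 3, β ∈ ℝ, τ ∈ ℝ, and p > p*_β = (N+β)/(N-2). Then there exists ℓ > e and σ > 0 such that w₀(x) = |x|^{2-N}(ln|x|)^σ satisfies -Δw₀(x) ≥ |x|^β (ln|x|)^τ w₀(x)^p for all |x| > ℓ; i.e., the problem -Δu = |x|^β(ln|x|)^τ u^p in ℝ^N \ B_ℓ(0) with u ≥ 0 on ∂B_ℓ(0) has a positive bounded supersolution. -/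
open Real Filter Metric Bornology

noncomputable def Fb (b c s : ℝ) : ℝ := s ^ b * (2⁻¹ * Real.log s) ^ c

lemma hFb (b c : ℝ) {s : ℝ} (hs : 1 < s) :
    HasDerivAt (Fb b c) (b * Fb (b-1) c s + (c/2) * Fb (b-1) (c-1) s) s := by
  have hs0 : (0:ℝ) < s := lt_trans one_pos hs
  have hL0 : (0:ℝ) < 2⁻¹ * Real.log s := by
    have := Real.log_pos hs; positivity
  have h1 : HasDerivAt (fun t : ℝ => t ^ b) (b * s ^ (b-1)) s := by
    simpa [mul_comm] using Real.hasDerivAt_rpow_const (x := s) (p := b) (Or.inl hs0.ne')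
  have h2 : HasDerivAt (fun t : ℝ => 2⁻¹ * Real.log t) (2⁻¹ * s⁻¹) s :=
    (Real.hasDerivAt_log hs0.ne').const_mul 2⁻¹
  have h3 : HasDerivAt (fun u : ℝ => u ^ c) (c * (2⁻¹ * Real.log s) ^ (c-1))
      (2⁻¹ * Real.log s) := by
    simpa [mul_comm] using Real.hasDerivAt_rpow_const (x := 2⁻¹ * Real.log s) (p := c)
      (Or.inl hL0.ne')
  have h4 := h3.comp s h2
  have h5 := h1.mul h4
  have hsub : s ^ b * s⁻¹ = s ^ (b - 1) := by
    rw [show b - 1 = b + (-1) by ring, Real.rpow_add hs0, Real.rpow_neg_one]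
  refine h5.congr_deriv ?_
  simp only [Fb, Function.comp]
  rw [← hsub]
  ring

section lapcalc
variable (N : ℕ) (σ : ℝ)

noncomputable def aa (N : ℕ) : ℝ := (2 - (N:ℝ)) / 2

noncomputable def g1 (N : ℕ) (σ s : ℝ) : ℝ :=
  aa N * Fb (aa N - 1) σ s + (σ/2) * Fb (aa N - 1) (σ-1) s

noncomputable def g2 (N : ℕ) (σ s : ℝ) : ℝ :=
  aa N * ((aa N - 1) * Fb (aa N - 1 - 1) σ s + (σ/2) * Fb (aa N - 1 - 1) (σ-1) s)
  + (σ/2) * ((aa N - 1) * Fb (aa N - 1 - 1) (σ-1) s + ((σ-1)/2) * Fb (aa N - 1 - 1) (σ-1-1) s)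

lemma hg1 {s : ℝ} (hs : 1 < s) : HasDerivAt (Fb (aa N) σ) (g1 N σ s) s := by
  simpa [g1, aa] using hFb (aa N) σ hs

lemma hg2 {s : ℝ} (hs : 1 < s) : HasDerivAt (g1 N σ) (g2 N σ s) s := by
  exact ((hFb (aa N - 1) σ hs).const_mul (aa N)).add
    ((hFb (aa N - 1) (σ-1) hs).const_mul (σ/2))

variable {N : ℕ}

lemma key_eq (σ : ℝ) (y : EuclideanSpace ℝ (Fin N)) (hy : 1 < ‖y‖) :
    ‖y‖ ^ ((2:ℝ) - N) * (Real.log ‖y‖) ^ σ = Fb (aa N) σ (‖y‖^2) := by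
  have h0 : (0:ℝ) < ‖y‖ := lt_trans one_pos hy
  unfold Fb
  rw [← Real.rpow_natCast ‖y‖ 2, ← Real.rpow_mul (norm_nonneg y), Real.log_rpow h0,
    show ((2:ℕ):ℝ) * aa N = 2 - (N:ℝ) by unfold aa; push_cast; ring,
    show (2:ℝ)⁻¹ * (((2:ℕ):ℝ) * Real.log ‖y‖) = Real.log ‖y‖ by push_cast; ring]

lemma lap_radial (σ : ℝ) (x : EuclideanSpace ℝ (Fin N)) (hx : 1 < ‖x‖) :
    lap (fun y : EuclideanSpace ℝ (Fin N) => ‖y‖ ^ ((2:ℝ) - N) * (Real.log ‖y‖) ^ σ) x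
      = (N:ℝ) * (2 * g1 N σ (‖x‖^2)) + (4 * g2 N σ (‖x‖^2)) * ‖x‖^2 := by
  have hU : IsOpen {y : EuclideanSpace ℝ (Fin N) | 1 < ‖y‖} :=
    isOpen_lt continuous_const continuous_norm
  have hD1 : ∀ y : EuclideanSpace ℝ (Fin N), 1 < ‖y‖ →
      HasFDerivAt (fun y : EuclideanSpace ℝ (Fin N) => ‖y‖ ^ ((2:ℝ) - N) * (Real.log ‖y‖) ^ σ)
        ((2 * g1 N σ (‖y‖^2)) • (innerSL ℝ y)) y := by
    intro y hy
    have hs : 1 < ‖y‖^2 := one_lt_pow₀ hy two_ne_zero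
    have hsq := (hasStrictFDerivAt_norm_sq y).hasFDerivAt
    have hcomp := (hg1 N σ hs).comp_hasFDerivAt y hsq
    have heq : (fun y : EuclideanSpace ℝ (Fin N) => ‖y‖ ^ ((2:ℝ) - N) * (Real.log ‖y‖) ^ σ)
        =ᶠ[nhds y] fun z => Fb (aa N) σ (‖z‖^2) :=
      Filter.eventuallyEq_of_mem (hU.mem_nhds hy) (fun z hz => key_eq σ z hz)
    refine HasFDerivAt.congr_of_eventuallyEq ?_ heq
    refine hcomp.congr_fderiv ?_
    ext v
    simp [smul_smul]
    ring
  have hfd : fderiv ℝ (fun y : EuclideanSpace ℝ (Fin N) => ‖y‖ ^ ((2:ℝ) - N) * (Real.log ‖y‖) ^ σ)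
      =ᶠ[nhds x] fun y => (2 * g1 N σ (‖y‖^2)) • (innerSL ℝ y) :=
    Filter.eventuallyEq_of_mem (hU.mem_nhds hx) (fun y hy => (hD1 y hy).fderiv)
  have hs : 1 < ‖x‖^2 := one_lt_pow₀ hx two_ne_zero
  have hsq := (hasStrictFDerivAt_norm_sq x).hasFDerivAt
  have hc : HasFDerivAt (fun y : EuclideanSpace ℝ (Fin N) => 2 * g1 N σ (‖y‖^2))
      ((2:ℝ) • (g2 N σ (‖x‖^2) • ((2:ℕ) • innerSL ℝ x))) x :=
    by simpa using ((hg2 N σ hs).comp_hasFDerivAt x hsq).const_mul 2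
  have hlin : HasFDerivAt (fun y : EuclideanSpace ℝ (Fin N) => innerSL ℝ y)
      (innerSL ℝ (E := EuclideanSpace ℝ (Fin N))) x :=
    (innerSL ℝ (E := EuclideanSpace ℝ (Fin N))).hasFDerivAt
  have hDM := hc.smul hlin
  have hsnd := hfd.fderiv_eq.trans hDM.fderiv
  unfold lap
  have hterm : ∀ i : Fin N,
      iteratedFDeriv ℝ 2 (fun y : EuclideanSpace ℝ (Fin N) =>
          ‖y‖ ^ ((2:ℝ) - N) * (Real.log ‖y‖) ^ σ) x
          ![EuclideanSpace.single i 1, EuclideanSpace.single i 1]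
        = 2 * g1 N σ (‖x‖^2) + 4 * g2 N σ (‖x‖^2) * (x i * x i) := by
    intro i
    rw [iteratedFDeriv_two_apply, hsnd]
    simp [innerSL_apply_apply ℝ, EuclideanSpace.inner_single_right, smul_smul]
    ring
  rw [Finset.sum_congr rfl (fun i _ => hterm i)]
  rw [Finset.sum_add_distrib, Finset.sum_const, ← Finset.mul_sum]
  have hnorm : ∑ i, x i * x i = ‖x‖^2 := by
    rw [← real_inner_self_eq_norm_sq]
    simp only [PiLp.inner_apply, RCLike.inner_apply, conj_trivial]
  rw [hnorm]
  simp

lemma genval {r : ℝ} (hr : 1 < r) (b c : ℝ) :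
    Fb b c (r^2) = r ^ (2*b) * (Real.log r) ^ c := by
  have hr0 : (0:ℝ) < r := lt_trans one_pos hr
  unfold Fb
  rw [← Real.rpow_natCast r 2, ← Real.rpow_mul hr0.le, Real.log_rpow hr0,
    show ((2:ℕ):ℝ) * b = 2*b by push_cast; ring,
    show (2:ℝ)⁻¹ * (((2:ℕ):ℝ) * Real.log r) = Real.log r by push_cast; ring]

lemma lap_val (N : ℕ) (σ : ℝ) {r : ℝ} (hr : 1 < r) :
    (N:ℝ) * (2 * g1 N σ (r^2)) + (4 * g2 N σ (r^2)) * r^2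
      = r ^ (-(N:ℝ)) * ((2 - (N:ℝ)) * σ * (Real.log r)^(σ-1)
          + σ*(σ-1) * (Real.log r)^(σ-2)) := by
  have hr0 : (0:ℝ) < r := lt_trans one_pos hr
  unfold g1 g2
  simp only [genval hr]
  rw [show (2*(aa N - 1)) = -(N:ℝ) by unfold aa; ring,
    show (2*(aa N - 1 - 1)) = -(N:ℝ) + (-2:ℝ) by unfold aa; ring,
    Real.rpow_add hr0,
    show r ^ ((-2):ℝ) = (r^2)⁻¹ by
      rw [show ((-2):ℝ) = -((2:ℕ):ℝ) by norm_num, Real.rpow_neg hr0.le,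
        Real.rpow_natCast]]
  have h2 : (r:ℝ)^2 ≠ 0 := by positivity
  field_simp
  unfold aa
  ring

theorem stmt13 (N : ℕ) (hN : 3 ≤ N) (β τ p : ℝ)
    (hp : ((N:ℝ) + β) / ((N:ℝ) - 2) < p) :
    ∃ ℓ : ℝ, Real.exp 1 < ℓ ∧ ∃ σ : ℝ, 0 < σ ∧
      ∀ x : EuclideanSpace ℝ (Fin N), ℓ < ‖x‖ →
        ‖x‖ ^ β * (Real.log ‖x‖) ^ τ *
            (‖x‖ ^ ((2:ℝ) - N) * (Real.log ‖x‖) ^ σ) ^ p ≤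
          -lap (fun y : EuclideanSpace ℝ (Fin N) =>
            ‖y‖ ^ ((2:ℝ) - N) * (Real.log ‖y‖) ^ σ) x := by
  have hN2 : (0:ℝ) < (N:ℝ) - 2 := by
    have : (3:ℝ) ≤ (N:ℝ) := by exact_mod_cast hN
    linarith
  set ε : ℝ := ((N:ℝ) - 2) * p - β - N with hεdef
  have hε : 0 < ε := by
    rw [div_lt_iff₀ hN2] at hp
    simp only [hεdef]
    linarith
  set c : ℝ := τ + p/2 + 1/2 with hcdef
  set c0 : ℝ := ((N:ℝ) - 2) / 2 with hc0def
  have hc0 : 0 < c0 := by positivity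
  have hbd := (isLittleO_log_rpow_rpow_atTop c hε).def hc0
  obtain ⟨ℓ₀, hℓ₀⟩ := Filter.eventually_atTop.mp hbd
  refine ⟨max ℓ₀ (Real.exp 1 + 1), lt_of_lt_of_le (by linarith) (le_max_right _ _),
    1/2, by norm_num, ?_⟩
  intro x hx
  set r := ‖x‖ with hrdef
  have hre : Real.exp 1 < r := by
    have : Real.exp 1 + 1 ≤ max ℓ₀ (Real.exp 1 + 1) := le_max_right _ _
    linarith
  have h1e : (1:ℝ) < Real.exp 1 := by have := Real.add_one_le_exp 1; linarith
  have hr1 : 1 < r := lt_trans h1e hre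
  have hr0 : (0:ℝ) < r := lt_trans one_pos hr1
  have hL1 : 1 < Real.log r := (Real.lt_log_iff_exp_lt hr0).mpr hre
  have hL0 : 0 < Real.log r := lt_trans one_pos hL1
  set L := Real.log r with hLdef
  -- the Laplacian value
  have hlap : lap (fun y : EuclideanSpace ℝ (Fin N) =>
      ‖y‖ ^ ((2:ℝ) - N) * (Real.log ‖y‖) ^ (1/2 : ℝ)) x
      = r ^ (-(N:ℝ)) * ((2 - (N:ℝ)) * (1/2 : ℝ) * L ^ ((1/2 : ℝ)-1)
          + (1/2 : ℝ)*((1/2 : ℝ)-1) * L ^ ((1/2 : ℝ)-2)) :=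
    (lap_radial (1/2 : ℝ) x hr1).trans (lap_val N (1/2 : ℝ) hr1)
  -- the key asymptotic bound
  have hkey : L ^ c ≤ c0 * r ^ ε := by
    have h := hℓ₀ r (le_trans (le_max_left _ _) (le_of_lt hx))
    rwa [Real.norm_eq_abs, Real.norm_eq_abs, abs_of_pos (Real.rpow_pos_of_pos hL0 c),
      abs_of_pos (Real.rpow_pos_of_pos hr0 ε)] at h
  -- rewrite LHS
  have hLHS : r ^ β * L ^ τ * (r ^ ((2:ℝ) - N) * L ^ (1/2 : ℝ)) ^ p
      = (r ^ (-(N:ℝ)) * L ^ ((1/2 : ℝ)-1)) * (L ^ c * r ^ (-ε)) := by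
    rw [Real.mul_rpow (Real.rpow_nonneg hr0.le _) (Real.rpow_nonneg hL0.le _),
      ← Real.rpow_mul hr0.le, ← Real.rpow_mul hL0.le]
    rw [show r ^ β * L ^ τ * (r ^ (((2:ℝ) - N) * p) * L ^ ((1/2 : ℝ) * p))
        = (r ^ β * r ^ (((2:ℝ) - N) * p)) * (L ^ τ * L ^ ((1/2 : ℝ) * p)) by ring,
      ← Real.rpow_add hr0, ← Real.rpow_add hL0,
      show (r ^ (-(N:ℝ)) * L ^ ((1/2 : ℝ)-1)) * (L ^ c * r ^ (-ε))
        = (r ^ (-(N:ℝ)) * r ^ (-ε)) * (L ^ ((1/2 : ℝ)-1) * L ^ c) by ring,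
      ← Real.rpow_add hr0, ← Real.rpow_add hL0]
    congr 1
    · congr 1
      simp only [hεdef]
      ring
    · congr 1
      simp only [hcdef]
      ring
  rw [hLHS, hlap]
  have hrN : (0:ℝ) < r ^ (-(N:ℝ)) := Real.rpow_pos_of_pos hr0 _
  have hL1' : (0:ℝ) < L ^ ((1/2 : ℝ)-1) := Real.rpow_pos_of_pos hL0 _
  have hL2' : (0:ℝ) < L ^ ((1/2 : ℝ)-2) := Real.rpow_pos_of_pos hL0 _
  have hee : r ^ ε * r ^ (-ε) = 1 := by
    rw [← Real.rpow_add hr0]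
    simp
  have step1 : (r ^ (-(N:ℝ)) * L ^ ((1/2 : ℝ)-1)) * (L ^ c * r ^ (-ε))
      ≤ (r ^ (-(N:ℝ)) * L ^ ((1/2 : ℝ)-1)) * (c0 * r ^ ε * r ^ (-ε)) := by
    have hrε : (0:ℝ) < r ^ (-ε) := Real.rpow_pos_of_pos hr0 _
    have : L ^ c * r ^ (-ε) ≤ c0 * r ^ ε * r ^ (-ε) := by
      apply mul_le_mul_of_nonneg_right hkey hrε.le
    exact mul_le_mul_of_nonneg_left this (by positivity)
  refine le_trans step1 ?_
  rw [mul_assoc c0, hee, mul_one]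
  rw [hc0def]
  nlinarith [mul_pos hrN hL2', mul_pos hrN hL1']
end lapcalc
end

section
/- Let N ≥ 3, β ∈ ℝ, p = p*_β = (N+β)/(N-2), and τ < -1. Then there exist σ > 0 and ℓ > e such that w₀(x) = |x|^{2-N}(ln|x|)^σ is a positive supersolution of -Δu = |x|^β(ln|x|)^τ u^p in ℝ^N \ B_ℓ(0); explicitly it suffices that σ(p*_β - 1) < -τ - 1 (take σ = 1 if β ≤ -2, and any σ ∈ (0, (-τ-1)/(p*_β - 1)) if β > -2). -/
open Real Filter Metric Bornology

noncomputable def G1 (c σ s : ℝ) : ℝ :=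
  s ^ (c-1) * (c * (Real.log s / 2) ^ σ + (σ/2) * (Real.log s / 2) ^ (σ-1))

noncomputable def G2 (c σ s : ℝ) : ℝ :=
  s ^ (c-2) * (c*(c-1) * (Real.log s / 2) ^ σ + (σ/2)*(2*c-1) * (Real.log s / 2) ^ (σ-1)
    + (σ*(σ-1)/4) * (Real.log s / 2) ^ (σ-2))

lemma hasDerivAt_G (c σ : ℝ) {s : ℝ} (hs : 1 < s) :
    HasDerivAt (fun t => t ^ c * (Real.log t / 2) ^ σ) (G1 c σ s) s := by
  unfold G1

  have hs0 : (0:ℝ) < s := lt_trans one_pos hs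
  have hL : (0:ℝ) < Real.log s / 2 := by
    have := Real.log_pos hs; linarith
  have h1 : HasDerivAt (fun t : ℝ => t ^ c) (c * s ^ (c-1)) s :=
    Real.hasDerivAt_rpow_const (Or.inl hs0.ne')
  have hlog : HasDerivAt (fun t : ℝ => Real.log t / 2) (s⁻¹ / 2) s :=
    (Real.hasDerivAt_log hs0.ne').div_const 2
  have h2 : HasDerivAt (fun t : ℝ => (Real.log t / 2) ^ σ)
      (s⁻¹ / 2 * σ * (Real.log s / 2) ^ (σ-1)) s :=
    hlog.rpow_const (Or.inl hL.ne')
  have h := h1.mul h2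
  convert h using 1
  iterate 3 rfl
  have e1 : s ^ c = s ^ (c-1) * s := by
    rw [← Real.rpow_add_one hs0.ne' (c-1)]; ring_nf
  rw [e1]
  field_simp

lemma hasDerivAt_G1 (c σ : ℝ) {s : ℝ} (hs : 1 < s) :
    HasDerivAt (fun t => G1 c σ t) (G2 c σ s) s := by
  unfold G1 G2

  have hs0 : (0:ℝ) < s := lt_trans one_pos hs
  have hL : (0:ℝ) < Real.log s / 2 := by
    have := Real.log_pos hs; linarith
  have h1 : HasDerivAt (fun t : ℝ => t ^ (c-1)) ((c-1) * s ^ (c-1-1)) s :=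
    Real.hasDerivAt_rpow_const (Or.inl hs0.ne')
  have hlog : HasDerivAt (fun t : ℝ => Real.log t / 2) (s⁻¹ / 2) s :=
    (Real.hasDerivAt_log hs0.ne').div_const 2
  have hA1 : HasDerivAt (fun t : ℝ => c * (Real.log t / 2) ^ σ)
      (c * (s⁻¹ / 2 * σ * (Real.log s / 2) ^ (σ-1))) s :=
    (hlog.rpow_const (Or.inl hL.ne')).const_mul c
  have hA2 : HasDerivAt (fun t : ℝ => (σ/2) * (Real.log t / 2) ^ (σ-1))
      ((σ/2) * (s⁻¹ / 2 * (σ-1) * (Real.log s / 2) ^ (σ-1-1))) s :=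
    (hlog.rpow_const (Or.inl hL.ne')).const_mul (σ/2)
  have h := h1.mul (hA1.add hA2)
  convert h using 1
  iterate 3 rfl
  simp only [Pi.add_apply]
  have e0 : s ^ (c-1) = s ^ (c-2) * s := by
    rw [← Real.rpow_add_one hs0.ne' (c-2)]; ring_nf
  have e1 : c - 1 - 1 = c - 2 := by ring
  have e2 : σ - 1 - 1 = σ - 2 := by ring
  have e3 : (Real.log s / 2) ^ σ = (Real.log s / 2) ^ (σ-1) * (Real.log s / 2) := by
    rw [← Real.rpow_add_one hL.ne' (σ-1)]; ring_nf
  have e4 : (Real.log s / 2) ^ (σ-1) = (Real.log s / 2) ^ (σ-2) * (Real.log s / 2) := by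
    rw [← Real.rpow_add_one hL.ne' (σ-2)]; ring_nf
  rw [e1, e2, e3, e4, e0]
  field_simp
  ring


set_option maxHeartbeats 1600000 in
lemma lap_eq (N : ℕ) (hN : 3 ≤ N) (σ : ℝ) (x : EuclideanSpace ℝ (Fin N)) (hx : 1 < ‖x‖) :
    lap (fun y : EuclideanSpace ℝ (Fin N) =>
        ‖y‖ ^ ((2:ℝ) - N) * (Real.log ‖y‖) ^ σ) x
      = 2*N * G1 (((2:ℝ)-N)/2) σ (‖x‖^2) + 4*(‖x‖^2) * G2 (((2:ℝ)-N)/2) σ (‖x‖^2) := by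
  classical
  set c : ℝ := ((2:ℝ)-N)/2 with hc
  set u : EuclideanSpace ℝ (Fin N) → ℝ :=
    fun y => ‖y‖ ^ ((2:ℝ) - N) * (Real.log ‖y‖) ^ σ with hu
  set W : EuclideanSpace ℝ (Fin N) → ℝ :=
    fun y => (‖y‖^2) ^ c * (Real.log (‖y‖^2) / 2) ^ σ with hW
  set M : EuclideanSpace ℝ (Fin N) →L[ℝ] EuclideanSpace ℝ (Fin N) →L[ℝ] ℝ :=
    (isBoundedBilinearMap_inner (𝕜 := ℝ) (E := EuclideanSpace ℝ (Fin N))).toContinuousLinearMap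
    with hM
  have hMa : ∀ y z : EuclideanSpace ℝ (Fin N), M y z = inner ℝ y z := fun _ _ => rfl
  have hS : IsOpen {y : EuclideanSpace ℝ (Fin N) | 1 < ‖y‖} :=
    isOpen_lt continuous_const continuous_norm
  have hEq : ∀ y : EuclideanSpace ℝ (Fin N), 1 < ‖y‖ → u y = W y := by
    intro y hy
    have hy0 : (0:ℝ) < ‖y‖ := lt_trans one_pos hy
    have h1 : (‖y‖^2 : ℝ) ^ c = ‖y‖ ^ ((2:ℝ) - N) := by
      rw [← Real.rpow_natCast ‖y‖ 2, ← Real.rpow_mul (norm_nonneg y)]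
      norm_num [hc]
      ring_nf
    have h2 : Real.log (‖y‖^2) / 2 = Real.log ‖y‖ := by
      rw [Real.log_pow]; push_cast; ring
    simp only [hu, hW, h1, h2]
  -- derivative of y ↦ ‖y‖^2
  have hnsq : ∀ y : EuclideanSpace ℝ (Fin N),
      HasFDerivAt (fun z : EuclideanSpace ℝ (Fin N) => (‖z‖^2 : ℝ))
        ((2:ℝ) • innerSL ℝ y) y := by
    intro y
    have := (hasStrictFDerivAt_norm_sq y).hasFDerivAt
    refine this.congr_fderiv ?_
    ext z
    simp [two_smul]
  -- fderiv of u on the open set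
  have key : ∀ y : EuclideanSpace ℝ (Fin N), 1 < ‖y‖ →
      fderiv ℝ u y = (2 * G1 c σ (‖y‖^2)) • (M y) := by
    intro y hy
    have hs : (1:ℝ) < ‖y‖^2 := by nlinarith
    have hWd : HasFDerivAt W ((2 * G1 c σ (‖y‖^2)) • (M y)) y := by
      have h := (hasDerivAt_G c σ hs).comp_hasFDerivAt y (hnsq y)
      refine h.congr_fderiv ?_
      ext z
      simp only [ContinuousLinearMap.smul_apply, smul_eq_mul, two_smul,
        ContinuousLinearMap.add_apply, hMa, innerSL_apply_apply]
      ring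
    have huW : u =ᶠ[nhds y] W :=
      Filter.eventuallyEq_of_mem (hS.mem_nhds hy) (fun z hz => hEq z hz)
    rw [huW.fderiv_eq, hWd.fderiv]
  -- second derivative at x
  have hs : (1:ℝ) < ‖x‖^2 := by nlinarith
  set V : EuclideanSpace ℝ (Fin N) → (EuclideanSpace ℝ (Fin N) →L[ℝ] ℝ) :=
    fun y => (2 * G1 c σ (‖y‖^2)) • (M y) with hV
  have hcd : HasFDerivAt (fun y : EuclideanSpace ℝ (Fin N) => 2 * G1 c σ (‖y‖^2))
      ((2 * G2 c σ (‖x‖^2)) • ((2:ℝ) • M x)) x := by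
    have h := ((hasDerivAt_G1 c σ hs).comp_hasFDerivAt x (hnsq x)).const_mul (2:ℝ)
    refine h.congr_fderiv ?_
    ext z
    simp only [ContinuousLinearMap.smul_apply, smul_eq_mul, two_smul,
      ContinuousLinearMap.add_apply, hMa, innerSL_apply_apply]
    ring
  have hVd : HasFDerivAt V
      ((2 * G1 c σ (‖x‖^2)) • M
        + ((2 * G2 c σ (‖x‖^2)) • ((2:ℝ) • M x)).smulRight (M x)) x :=
    hcd.smul M.hasFDerivAt
  have hffd : fderiv ℝ (fderiv ℝ u) x
      = (2 * G1 c σ (‖x‖^2)) • M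
        + ((2 * G2 c σ (‖x‖^2)) • ((2:ℝ) • M x)).smulRight (M x) := by
    have hfu : fderiv ℝ u =ᶠ[nhds x] V :=
      Filter.eventuallyEq_of_mem (hS.mem_nhds hx) (fun z hz => key z hz)
    rw [hfu.fderiv_eq, hVd.fderiv]
  -- assemble
  have happ : ∀ i : Fin N,
      iteratedFDeriv ℝ 2 u x ![EuclideanSpace.single i 1, EuclideanSpace.single i 1]
        = 2 * G1 c σ (‖x‖^2) + 4 * G2 c σ (‖x‖^2) * (x i * x i) := by
    intro i
    rw [iteratedFDeriv_two_apply, hffd]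
    simp only [ContinuousLinearMap.add_apply, ContinuousLinearMap.smul_apply,
      ContinuousLinearMap.smulRight_apply, Matrix.cons_val_zero, Matrix.cons_val_one,
      Matrix.head_cons]
    simp only [hMa, EuclideanSpace.inner_single_right, EuclideanSpace.inner_single_left,
      EuclideanSpace.single_apply, if_pos rfl, if_true, starRingEnd_apply, star_trivial, one_mul,
      smul_eq_mul, two_smul]
    ring
  rw [lap]
  rw [Finset.sum_congr rfl (fun i _ => happ i)]
  rw [Finset.sum_add_distrib, Finset.sum_const, Finset.card_univ]
  have hns : ∑ i, x i * x i = ‖x‖^2 := by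
    rw [EuclideanSpace.norm_eq, Real.sq_sqrt (by positivity)]
    simp [Real.norm_eq_abs, sq_abs, sq]
  rw [← Finset.mul_sum, hns]
  simp [Fintype.card_fin]
  ring
theorem stmt14 (N : ℕ) (hN : 3 ≤ N) (β τ p : ℝ)
    (hp : p = ((N:ℝ) + β) / ((N:ℝ) - 2)) (hτ : τ < -1) :
    ∃ σ : ℝ, 0 < σ ∧ σ * (((N:ℝ) + β) / ((N:ℝ) - 2) - 1) < -τ - 1 ∧
      ∃ ℓ : ℝ, Real.exp 1 < ℓ ∧
        ∀ x : EuclideanSpace ℝ (Fin N), ℓ < ‖x‖ →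
          ‖x‖ ^ β * (Real.log ‖x‖) ^ τ *
              (‖x‖ ^ ((2:ℝ) - N) * (Real.log ‖x‖) ^ σ) ^ p ≤
            -lap (fun y : EuclideanSpace ℝ (Fin N) =>
              ‖y‖ ^ ((2:ℝ) - N) * (Real.log ‖y‖) ^ σ) x := by
  have hN2 : (1:ℝ) ≤ (N:ℝ) - 2 := by
    have : (3:ℝ) ≤ (N:ℝ) := by exact_mod_cast hN
    linarith
  have hN2' : (0:ℝ) < (N:ℝ) - 2 := by linarith
  have hτ' : (0:ℝ) < -τ - 1 := by linarith
  set σ : ℝ := min (((N:ℝ)-2)⁻¹) ((-τ-1)/(2 * max (p-1) 1)) with hσdef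
  have hmax : (0:ℝ) < max (p-1) 1 := lt_of_lt_of_le one_pos (le_max_right _ _)
  have hσpos : 0 < σ := lt_min (inv_pos.mpr hN2') (by positivity)
  have hσ1 : σ ≤ 1 := le_trans (min_le_left _ _) (by
    rw [inv_le_one_iff₀]; right; exact hN2)
  have hσp : σ * (p - 1) < -τ - 1 := by
    have h1 : σ * (p-1) ≤ σ * max (p-1) 1 :=
      mul_le_mul_of_nonneg_left (le_max_left _ _) hσpos.le
    have h2 : σ ≤ (-τ-1)/(2 * max (p-1) 1) := min_le_right _ _
    have h3 : σ * max (p-1) 1 ≤ (-τ-1)/2 := by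
      have := mul_le_mul_of_nonneg_right h2 (le_of_lt hmax)
      calc σ * max (p-1) 1 ≤ (-τ-1)/(2 * max (p-1) 1) * max (p-1) 1 := this
        _ = (-τ-1)/2 := by field_simp
    linarith
  refine ⟨σ, hσpos, by rw [← hp]; exact hσp, ?_⟩
  set e0 : ℝ := τ + 1 + σ * (p - 1) with he0def
  have he0 : e0 < 0 := by rw [he0def]; linarith
  set ℓ : ℝ := Real.exp (Real.exp (max 2 (Real.log σ / e0))) with hℓdef
  have hm2 : (2:ℝ) ≤ max 2 (Real.log σ / e0) := le_max_left _ _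
  have hexp1 : (1:ℝ) < Real.exp (max 2 (Real.log σ / e0)) := by
    calc (1:ℝ) < Real.exp 2 := by
          have := Real.add_one_lt_exp (x := 2) (by norm_num); linarith
      _ ≤ _ := Real.exp_le_exp.mpr hm2
  refine ⟨ℓ, by rw [hℓdef]; exact Real.exp_lt_exp.mpr hexp1, ?_⟩
  intro x hx
  set r : ℝ := ‖x‖ with hrdef
  have hℓ1 : (1:ℝ) < ℓ := by
    rw [hℓdef]
    calc (1:ℝ) < Real.exp (max 2 (Real.log σ / e0)) := hexp1
      _ ≤ _ := by
          have h := Real.add_one_le_exp (Real.exp (max 2 (Real.log σ / e0)))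
          linarith [Real.exp_pos (max 2 (Real.log σ / e0))]
  have hr1 : (1:ℝ) < r := lt_trans hℓ1 hx
  have hr0 : (0:ℝ) < r := lt_trans one_pos hr1
  set L : ℝ := Real.log r with hLdef
  have hLgt : Real.exp (max 2 (Real.log σ / e0)) < L := by
    rw [hLdef]
    calc Real.exp (max 2 (Real.log σ / e0)) = Real.log ℓ := by rw [hℓdef, Real.log_exp]
      _ < Real.log r := Real.log_lt_log (lt_trans one_pos hℓ1) hx
  have hL1 : (1:ℝ) < L := lt_trans hexp1 hLgt
  have hL0 : (0:ℝ) < L := lt_trans one_pos hL1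
  have hlogL : Real.log σ / e0 ≤ Real.log L := by
    calc Real.log σ / e0 ≤ max 2 (Real.log σ / e0) := le_max_right _ _
      _ = Real.log (Real.exp (max 2 (Real.log σ / e0))) := (Real.log_exp _).symm
      _ ≤ Real.log L := Real.log_le_log (Real.exp_pos _) hLgt.le
  -- compute the Laplacian
  rw [lap_eq N hN σ x hr1]
  have hrsq : ∀ a : ℝ, ((r^2 : ℝ)) ^ a = r ^ (2*a) := by
    intro a
    rw [← Real.rpow_natCast r 2, ← Real.rpow_mul hr0.le]
    norm_num
  have hlogsq : Real.log (r^2) / 2 = L := by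
    rw [Real.log_pow, hLdef]; push_cast; ring
  have hRHS : -(2*(N:ℝ) * G1 (((2:ℝ)-N)/2) σ (r^2) + 4*(r^2) * G2 (((2:ℝ)-N)/2) σ (r^2))
      = r ^ (-(N:ℝ)) * (σ*((N:ℝ)-2) * L ^ (σ-1) - σ*(σ-1) * L ^ (σ-2)) := by
    unfold G1 G2
    rw [hrsq, hrsq, hlogsq]
    have h1 : (2:ℝ) * ((((2:ℝ)-N)/2) - 1) = -(N:ℝ) := by ring
    have h2 : (2:ℝ) * ((((2:ℝ)-N)/2) - 2) = -(N:ℝ) - 2 := by ring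
    rw [h1, h2]
    have h3 : (r^2 : ℝ) * r ^ (-(N:ℝ)-2) = r ^ (-(N:ℝ)) := by
      rw [← Real.rpow_natCast r 2, ← Real.rpow_add hr0]
      norm_num
    have h4 : (4:ℝ)*(r^2) * (r ^ (-(N:ℝ)-2) * ((((2:ℝ)-N)/2)*((((2:ℝ)-N)/2)-1) * L ^ σ
        + (σ/2)*(2*(((2:ℝ)-N)/2)-1) * L ^ (σ-1) + (σ*(σ-1)/4) * L ^ (σ-2)))
        = 4 * r ^ (-(N:ℝ)) * ((((2:ℝ)-N)/2)*((((2:ℝ)-N)/2)-1) * L ^ σ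
        + (σ/2)*(2*(((2:ℝ)-N)/2)-1) * L ^ (σ-1) + (σ*(σ-1)/4) * L ^ (σ-2)) := by
      rw [← h3]; ring
    rw [h4]
    generalize L ^ σ = A
    generalize L ^ (σ-1) = B
    generalize L ^ (σ-2) = C
    ring
  rw [hRHS]
  -- compute the left-hand side
  have hLσ : (0:ℝ) ≤ L ^ σ := Real.rpow_nonneg hL0.le σ
  have hLHS : r ^ β * L ^ τ * (r ^ ((2:ℝ) - N) * L ^ σ) ^ p
      = r ^ (-(N:ℝ)) * L ^ (τ + σ*p) := by
    rw [Real.mul_rpow (Real.rpow_nonneg hr0.le _) hLσ,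
      ← Real.rpow_mul hr0.le, ← Real.rpow_mul hL0.le]
    have h5 : ((2:ℝ)-N)*p = -((N:ℝ)+β) := by
      rw [hp]; field_simp; ring
    rw [h5, show r^β * L^τ * (r^(-((N:ℝ)+β)) * L^(σ*p))
        = (r^β * r^(-((N:ℝ)+β))) * (L^τ * L^(σ*p)) by ring,
      ← Real.rpow_add hr0, ← Real.rpow_add hL0,
      show β + -((N:ℝ)+β) = -(N:ℝ) by ring]
  rw [hLHS]
  have hB : (0:ℝ) ≤ L ^ (σ-1) := Real.rpow_nonneg hL0.le _
  have hC : (0:ℝ) ≤ L ^ (σ-2) := Real.rpow_nonneg hL0.le _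
  have hkey : L ^ (τ + σ*p) ≤ σ*((N:ℝ)-2) * L^(σ-1) - σ*(σ-1) * L^(σ-2) := by
    have hsplit : L ^ (τ + σ*p) = L ^ (σ-1) * L ^ e0 := by
      rw [← Real.rpow_add hL0]; congr 1; rw [he0def]; ring
    have hLe0 : L ^ e0 ≤ σ := by
      rw [Real.rpow_def_of_pos hL0, ← Real.exp_log hσpos]
      apply Real.exp_le_exp.mpr
      have h6 : e0 * Real.log L ≤ e0 * (Real.log σ / e0) :=
        mul_le_mul_of_nonpos_left hlogL he0.le
      have h7 : e0 * (Real.log σ / e0) = Real.log σ := by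
        rw [mul_comm]; exact div_mul_cancel₀ _ he0.ne
      rw [mul_comm]; exact le_trans h6 (le_of_eq h7)
    calc L ^ (τ+σ*p) = L^(σ-1) * L^e0 := hsplit
      _ ≤ L^(σ-1) * σ := mul_le_mul_of_nonneg_left hLe0 hB
      _ ≤ σ*((N:ℝ)-2) * L^(σ-1) - σ*(σ-1)*L^(σ-2) := by
          nlinarith [mul_nonneg (mul_nonneg hσpos.le (sub_nonneg.mpr hσ1)) hC,
            mul_nonneg (mul_nonneg hσpos.le hB) (by linarith : (0:ℝ) ≤ (N:ℝ) - 3)]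
  exact mul_le_mul_of_nonneg_left hkey (Real.rpow_nonneg hr0.le _)
end
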